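/- arXiv:1901.02324 — 9 statements merged into one kernel-verified Lean document; each statement's English description precedes it below -/
import Mathlib

section
/- Let Ψ : ℝ^d → ℝ ∪ {∞} be a convex function of Legendre type with dom(Ψ*) = ℝ^d, let 𝒞 ⊆ dom(Ψ) be a convex set, and set Ω := Ψ + I_𝒞 (the restriction of Ψ to 𝒞). Then for every θ ∈ ℝ^d, the prediction function regularized by Ω equals the Bregman projection of ŷ_Ψ(θ) = ∇Ψ*(θ) onto 𝒞: ŷ_Ω(θ) = argmax_{μ ∈ 𝒞} ⟨θ, μ⟩ − Ψ(μ) = argmin_{μ ∈ 𝒞} B_Ψ(μ ‖ ∇Ψ*(θ)). -/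
open scoped RealInnerProductSpace

theorem fy_statement_7 {d : ℕ}
    (D : Set (EuclideanSpace ℝ (Fin d))) (Ψ : EuclideanSpace ℝ (Fin d) → ℝ)
    (gradΨ : EuclideanSpace ℝ (Fin d) → EuclideanSpace ℝ (Fin d))
    (hDne : D.Nonempty) (hconvΨ : ConvexOn ℝ D Ψ)
    (hdiff : ∀ μ ∈ interior D, HasGradientAt Ψ (gradΨ μ) μ)
    (hblow : ∀ u : ℕ → EuclideanSpace ℝ (Fin d), (∀ n, u n ∈ D) →
      ∀ x ∈ frontier D, Filter.Tendsto u Filter.atTop (nhds x) →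
        Filter.Tendsto (fun n => ‖gradΨ (u n)‖) Filter.atTop Filter.atTop)
    (hstrict : StrictConvexOn ℝ (interior D) Ψ)
    (𝒞 : Set (EuclideanSpace ℝ (Fin d))) (h𝒞D : 𝒞 ⊆ D) (h𝒞conv : Convex ℝ 𝒞)
    (yΨ : EuclideanSpace ℝ (Fin d) → EuclideanSpace ℝ (Fin d))
    (hyΨ : ∀ θ, yΨ θ ∈ interior D ∧
      ∀ μ ∈ D, ⟪θ, μ⟫ - Ψ μ ≤ ⟪θ, yΨ θ⟫ - Ψ (yΨ θ))
    (θ : EuclideanSpace ℝ (Fin d)) :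
    {μ | μ ∈ 𝒞 ∧ ∀ μ' ∈ 𝒞, ⟪θ, μ'⟫ - Ψ μ' ≤ ⟪θ, μ⟫ - Ψ μ}
      = {μ | μ ∈ 𝒞 ∧ ∀ μ' ∈ 𝒞,
          Ψ μ - Ψ (yΨ θ) - ⟪gradΨ (yΨ θ), μ - yΨ θ⟫
            ≤ Ψ μ' - Ψ (yΨ θ) - ⟪gradΨ (yΨ θ), μ' - yΨ θ⟫} := by
  obtain ⟨hyint, hymax⟩ := hyΨ θ
  set y := yΨ θ with hy
  -- gradΨ y = θ
  have hΨgrad : HasGradientAt Ψ (gradΨ y) y := hdiff y hyint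
  have hfder : HasFDerivAt (fun μ => ⟪θ, μ⟫ - Ψ μ)
      ((InnerProductSpace.toDual ℝ _ θ) - (InnerProductSpace.toDual ℝ _ (gradΨ y))) y := by
    have h1 : HasFDerivAt (fun μ : EuclideanSpace ℝ (Fin d) => ⟪θ, μ⟫)
        (InnerProductSpace.toDual ℝ _ θ) y := by
      have heq : InnerProductSpace.toDual ℝ (EuclideanSpace ℝ (Fin d)) θ = innerSL ℝ θ := by
        ext v
        simp [InnerProductSpace.toDual_apply_apply, real_inner_comm]
      rw [heq]
      exact (innerSL ℝ θ).hasFDerivAt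
    exact h1.sub (hasGradientAt_iff_hasFDerivAt.mp hΨgrad)
  have hmax : IsLocalMax (fun μ => ⟪θ, μ⟫ - Ψ μ) y := by
    have hnhds : interior D ∈ nhds y := isOpen_interior.mem_nhds hyint
    filter_upwards [hnhds] with μ hμ
    exact hymax μ (interior_subset hμ)
  have h0 := hmax.hasFDerivAt_eq_zero hfder
  have hgy : gradΨ y = θ := by
    have := sub_eq_zero.mp h0
    have := (InnerProductSpace.toDual ℝ (EuclideanSpace ℝ (Fin d))).injective this
    exact this.symm
  ext μ
  simp only [Set.mem_setOf_eq, hgy, inner_sub_right]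
  constructor
  · rintro ⟨hμ, h⟩
    exact ⟨hμ, fun μ' hμ' => by have := h μ' hμ'; linarith⟩
  · rintro ⟨hμ, h⟩
    exact ⟨hμ, fun μ' hμ' => by have := h μ' hμ'; linarith⟩
end

section
/- Let Ψ : ℝ^d → ℝ ∪ {∞} be a convex function of Legendre type with dom(Ψ*) = ℝ^d, let 𝒞 ⊆ dom(Ψ) be a convex set, and set Ω := Ψ + I_𝒞. Then for all θ ∈ ℝ^d and all y ∈ 𝒞, the Fenchel-Young loss satisfies L_Ω(θ; y) = B_Ψ(y ‖ ∇Ψ*(θ)) − B_Ψ(ŷ_Ω(θ) ‖ ∇Ψ*(θ)), i.e. it equals the difference of the Bregman divergences of y and of the regularized prediction ŷ_Ω(θ) from ∇Ψ*(θ). -/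
open scoped RealInnerProductSpace

/-!
STATEMENT 8: Difference of divergences. With Ψ convex of Legendre type (as in
statement 7), dom(Ψ*) = ℝ^d via `yΨ θ = ∇Ψ*(θ)`, 𝒞 ⊆ D convex, Ω := Ψ + I_𝒞
with regularized prediction selection `yΩ` and attained conjugate
Ω*(θ) = ⟨θ, yΩ θ⟩ − Ψ(yΩ θ): for all θ and all y ∈ 𝒞,
L_Ω(θ; y) = B_Ψ(y ‖ ∇Ψ*(θ)) − B_Ψ(ŷ_Ω(θ) ‖ ∇Ψ*(θ)).
-/

theorem fy_statement_8 {d : ℕ}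
    (D : Set (EuclideanSpace ℝ (Fin d))) (Ψ : EuclideanSpace ℝ (Fin d) → ℝ)
    (gradΨ : EuclideanSpace ℝ (Fin d) → EuclideanSpace ℝ (Fin d))
    (hDne : D.Nonempty) (hconvΨ : ConvexOn ℝ D Ψ)
    (hdiff : ∀ μ ∈ interior D, HasGradientAt Ψ (gradΨ μ) μ)
    (hblow : ∀ u : ℕ → EuclideanSpace ℝ (Fin d), (∀ n, u n ∈ D) →
      ∀ x ∈ frontier D, Filter.Tendsto u Filter.atTop (nhds x) →
        Filter.Tendsto (fun n => ‖gradΨ (u n)‖) Filter.atTop Filter.atTop)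
    (hstrict : StrictConvexOn ℝ (interior D) Ψ)
    (𝒞 : Set (EuclideanSpace ℝ (Fin d))) (h𝒞D : 𝒞 ⊆ D) (h𝒞conv : Convex ℝ 𝒞)
    (yΨ : EuclideanSpace ℝ (Fin d) → EuclideanSpace ℝ (Fin d))
    (hyΨ : ∀ θ, yΨ θ ∈ interior D ∧
      ∀ μ ∈ D, ⟪θ, μ⟫ - Ψ μ ≤ ⟪θ, yΨ θ⟫ - Ψ (yΨ θ))
    (yΩ : EuclideanSpace ℝ (Fin d) → EuclideanSpace ℝ (Fin d))
    (hyΩ : ∀ θ, yΩ θ ∈ 𝒞 ∧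
      ∀ μ ∈ 𝒞, ⟪θ, μ⟫ - Ψ μ ≤ ⟪θ, yΩ θ⟫ - Ψ (yΩ θ))
    (θ : EuclideanSpace ℝ (Fin d)) (y : EuclideanSpace ℝ (Fin d)) (hy : y ∈ 𝒞) :
    (⟪θ, yΩ θ⟫ - Ψ (yΩ θ)) + Ψ y - ⟪θ, y⟫
      = (Ψ y - Ψ (yΨ θ) - ⟪gradΨ (yΨ θ), y - yΨ θ⟫)
        - (Ψ (yΩ θ) - Ψ (yΨ θ) - ⟪gradΨ (yΨ θ), yΩ θ - yΨ θ⟫) := by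
  obtain ⟨hxint, hxmax⟩ := hyΨ θ
  set x := yΨ θ
  -- f μ = ⟪θ, μ⟫ - Ψ μ has a local max at x
  have hloc : IsLocalMax (fun μ => ⟪θ, μ⟫ - Ψ μ) x := by
    filter_upwards [isOpen_interior.mem_nhds hxint] with μ hμ
    exact hxmax μ (interior_subset hμ)
  have hgrad : HasGradientAt (fun μ => ⟪θ, μ⟫ - Ψ μ) (θ - gradΨ x) x := by
    have h1 : HasGradientAt (fun μ : EuclideanSpace ℝ (Fin d) => ⟪θ, μ⟫) θ x := by
      unfold HasGradientAt
      have := (InnerProductSpace.toDual ℝ (EuclideanSpace ℝ (Fin d)) θ).hasFDerivAt (x := x)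
      exact hasGradientAt_iff_hasFDerivAt.mpr (by rw [show (fun μ : EuclideanSpace ℝ (Fin d) => ⟪θ, μ⟫) = ⇑(InnerProductSpace.toDual ℝ (EuclideanSpace ℝ (Fin d)) θ) by ext μ; simp]; exact this)
    have h2 := h1.hasFDerivAt.sub (hdiff x hxint).hasFDerivAt
    have h3 : InnerProductSpace.toDual ℝ (EuclideanSpace ℝ (Fin d)) (θ - gradΨ x)
        = InnerProductSpace.toDual ℝ (EuclideanSpace ℝ (Fin d)) θ
          - InnerProductSpace.toDual ℝ (EuclideanSpace ℝ (Fin d)) (gradΨ x) := map_sub _ _ _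
    exact hasGradientAt_iff_hasFDerivAt.mpr (by rw [h3]; exact h2)
  have hzero : θ - gradΨ x = 0 := by
    have := hloc.hasFDerivAt_eq_zero hgrad
    have h2 : InnerProductSpace.toDual ℝ (EuclideanSpace ℝ (Fin d)) (θ - gradΨ x)
        = InnerProductSpace.toDual ℝ (EuclideanSpace ℝ (Fin d)) 0 := by
      simpa using this
    exact (InnerProductSpace.toDual ℝ (EuclideanSpace ℝ (Fin d))).injective h2
  have hθ : gradΨ x = θ := by
    have := sub_eq_zero.mp hzero; exact this.symm
  rw [hθ, inner_sub_right, inner_sub_right]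
  ring
end

section
/- Let Ψ : ℝ^d → ℝ ∪ {∞} be a convex function of Legendre type with dom(Ψ*) = ℝ^d, let 𝒞 ⊆ dom(Ψ) be a convex set, and set Ω := Ψ + I_𝒞. Then for all θ ∈ ℝ^d and all y ∈ 𝒞: 0 ≤ B_Ψ(y ‖ ŷ_Ω(θ)) ≤ L_Ω(θ; y), and moreover ŷ_Ω(θ) = y ⟺ L_Ω(θ; y) = 0 ⟺ B_Ψ(y ‖ ŷ_Ω(θ)) = 0 (equality holds when the loss is minimized). -/
open scoped RealInnerProductSpace

lemma fy9_slope_le {φ : ℝ → ℝ} {c M : ℝ} (h : HasDerivAt φ c 0)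
    (hs : ∀ t ∈ Set.Ioc (0:ℝ) 1, (φ t - φ 0) / t ≤ M) : c ≤ M := by
  have ht : Filter.Tendsto (slope φ 0) (nhdsWithin 0 (Set.Ioi 0)) (nhds c) :=
    (hasDerivAt_iff_tendsto_slope.mp h).mono_left
      (nhdsWithin_mono 0 (fun x hx => ne_of_gt hx))
  refine le_of_tendsto ht ?_
  filter_upwards [Ioc_mem_nhdsGT one_pos] with t ht
  simpa [slope, sub_zero, div_eq_inv_mul] using hs t ht

lemma fy9_line_deriv {d : ℕ} {Ψ : EuclideanSpace ℝ (Fin d) → ℝ}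
    {g w : EuclideanSpace ℝ (Fin d)} (h : HasGradientAt Ψ g w)
    (v : EuclideanSpace ℝ (Fin d)) :
    HasDerivAt (fun t : ℝ => Ψ (w + t • v)) ⟪g, v⟫ 0 := by
  have hline : HasDerivAt (fun t : ℝ => w + t • v) v 0 := by
    simpa using ((hasDerivAt_id (0:ℝ)).smul_const v).const_add w
  have hF := h.hasFDerivAt
  have hF' : HasFDerivAt Ψ (InnerProductSpace.toDual ℝ _ g) ((fun t : ℝ => w + t • v) 0) := by
    simpa using hF
  have h2 := hF'.comp_hasDerivAt 0 hline
  simp at h2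
  exact h2

theorem fy_statement_9 {d : ℕ}
    (D : Set (EuclideanSpace ℝ (Fin d))) (Ψ : EuclideanSpace ℝ (Fin d) → ℝ)
    (gradΨ : EuclideanSpace ℝ (Fin d) → EuclideanSpace ℝ (Fin d))
    (hDne : D.Nonempty) (hconvΨ : ConvexOn ℝ D Ψ)
    (hdiff : ∀ μ ∈ interior D, HasGradientAt Ψ (gradΨ μ) μ)
    (hblow : ∀ u : ℕ → EuclideanSpace ℝ (Fin d), (∀ n, u n ∈ D) →
      ∀ x ∈ frontier D, Filter.Tendsto u Filter.atTop (nhds x) →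
        Filter.Tendsto (fun n => ‖gradΨ (u n)‖) Filter.atTop Filter.atTop)
    (hstrict : StrictConvexOn ℝ (interior D) Ψ)
    (𝒞 : Set (EuclideanSpace ℝ (Fin d))) (h𝒞D : 𝒞 ⊆ D) (h𝒞conv : Convex ℝ 𝒞)
    (yΨ : EuclideanSpace ℝ (Fin d) → EuclideanSpace ℝ (Fin d))
    (hyΨ : ∀ θ, yΨ θ ∈ interior D ∧
      ∀ μ ∈ D, ⟪θ, μ⟫ - Ψ μ ≤ ⟪θ, yΨ θ⟫ - Ψ (yΨ θ))
    (yΩ : EuclideanSpace ℝ (Fin d) → EuclideanSpace ℝ (Fin d))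
    (hyΩ : ∀ θ, yΩ θ ∈ 𝒞 ∧
      ∀ μ ∈ 𝒞, ⟪θ, μ⟫ - Ψ μ ≤ ⟪θ, yΩ θ⟫ - Ψ (yΩ θ))
    (θ : EuclideanSpace ℝ (Fin d)) (y : EuclideanSpace ℝ (Fin d)) (hy : y ∈ 𝒞) :
    (0 ≤ Ψ y - Ψ (yΩ θ) - ⟪gradΨ (yΩ θ), y - yΩ θ⟫ ∧
      Ψ y - Ψ (yΩ θ) - ⟪gradΨ (yΩ θ), y - yΩ θ⟫
        ≤ (⟪θ, yΩ θ⟫ - Ψ (yΩ θ)) + Ψ y - ⟪θ, y⟫) ∧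
    (yΩ θ = y ↔ (⟪θ, yΩ θ⟫ - Ψ (yΩ θ)) + Ψ y - ⟪θ, y⟫ = 0) ∧
    ((⟪θ, yΩ θ⟫ - Ψ (yΩ θ)) + Ψ y - ⟪θ, y⟫ = 0 ↔
      Ψ y - Ψ (yΩ θ) - ⟪gradΨ (yΩ θ), y - yΩ θ⟫ = 0) := by
  classical
  set w := yΩ θ with hw
  set g := gradΨ w with hg
  -- D is contained in its interior (no boundary points in D, by the blow-up condition)
  have hDint : ∀ x ∈ D, x ∈ interior D := by
    intro x hx
    by_contra hxI
    have hxf : x ∈ frontier D :=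
      ⟨subset_closure hx, hxI⟩
    have h1 := hblow (fun _ => x) (fun _ => hx) x hxf tendsto_const_nhds
    exact not_tendsto_atTop_of_tendsto_nhds tendsto_const_nhds h1
  have hwC : w ∈ 𝒞 := (hyΩ θ).1
  have hwI : w ∈ interior D := hDint w (h𝒞D hwC)
  have hyI : y ∈ interior D := hDint y (h𝒞D hy)
  have hgrad : HasGradientAt Ψ g w := hdiff w hwI
  -- combination identity
  have hcomb : ∀ (z : EuclideanSpace ℝ (Fin d)) (t : ℝ),
      w + t • (z - w) = (1 - t) • w + t • z := by
    intro z t; module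
  -- gradient inequality for convex Ψ
  have key1 : ∀ z ∈ D, ⟪g, z - w⟫ ≤ Ψ z - Ψ w := by
    intro z hz
    refine fy9_slope_le (fy9_line_deriv hgrad (z - w)) ?_
    intro t ht
    rw [div_le_iff₀ ht.1]
    have hc := hconvΨ.2 (h𝒞D hwC) hz (by linarith [ht.2] : (0:ℝ) ≤ 1 - t)
      (le_of_lt ht.1) (by ring)
    rw [hcomb z t]
    simp only [smul_eq_mul, sub_zero, zero_smul, add_zero, smul_zero] at *
    have : w = (1 - (0:ℝ)) • w + (0:ℝ) • z := by module
    nlinarith [hc]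
  -- first-order optimality at w over 𝒞
  have key2 : ⟪θ, y - w⟫ - ⟪g, y - w⟫ ≤ 0 := by
    have hder : HasDerivAt (fun t : ℝ => ⟪θ, w + t • (y - w)⟫ - Ψ (w + t • (y - w)))
        (⟪θ, y - w⟫ - ⟪g, y - w⟫) 0 := by
      have h1 : HasDerivAt (fun t : ℝ => ⟪θ, w + t • (y - w)⟫) ⟪θ, y - w⟫ 0 := by
        have : (fun t : ℝ => ⟪θ, w + t • (y - w)⟫)
            = fun t : ℝ => ⟪θ, w⟫ + t * ⟪θ, y - w⟫ := by
          funext t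
          rw [inner_add_right, real_inner_smul_right]
        rw [this]
        simpa using ((hasDerivAt_id (0:ℝ)).mul_const ⟪θ, y - w⟫).const_add ⟪θ, w⟫
      exact h1.sub (fy9_line_deriv hgrad (y - w))
    refine fy9_slope_le hder ?_
    intro t ht
    have hmem : w + t • (y - w) ∈ 𝒞 := by
      rw [hcomb y t]
      exact h𝒞conv hwC hy (by linarith [ht.2]) (le_of_lt ht.1) (by ring)
    have hopt := (hyΩ θ).2 _ hmem
    have h0 : w + (0:ℝ) • (y - w) = w := by simp
    rw [div_le_iff₀ ht.1]
    simp only [h0]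
    nlinarith [hopt]
  -- strict convexity: if B = 0 then w = y
  have hstrictB : w ≠ y → 0 < Ψ y - Ψ w - ⟪g, y - w⟫ := by
    intro hne
    set m : EuclideanSpace ℝ (Fin d) := (1/2 : ℝ) • w + (1/2 : ℝ) • y with hm
    have hmI : m ∈ interior D :=
      hstrict.1 hwI hyI (by norm_num) (by norm_num) (by norm_num)
    have hmlt : Ψ m < (1/2 : ℝ) * Ψ w + (1/2 : ℝ) * Ψ y :=
      hstrict.2 hwI hyI hne (by norm_num) (by norm_num) (by norm_num)
    have hmk := key1 m (interior_subset hmI)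
    have hmw : m - w = (1/2 : ℝ) • (y - w) := by rw [hm]; module
    rw [hmw, real_inner_smul_right] at hmk
    nlinarith
  have hB0 : 0 ≤ Ψ y - Ψ w - ⟪g, y - w⟫ := by
    have := key1 y (h𝒞D hy); linarith
  have hBL : Ψ y - Ψ w - ⟪g, y - w⟫ ≤ (⟪θ, w⟫ - Ψ w) + Ψ y - ⟪θ, y⟫ := by
    have h2 : ⟪θ, y - w⟫ = ⟪θ, y⟫ - ⟪θ, w⟫ := inner_sub_right θ y w
    linarith [key2]
  have heq : w = y → (⟪θ, w⟫ - Ψ w) + Ψ y - ⟪θ, y⟫ = 0 := by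
    intro h; rw [h]; ring
  refine ⟨⟨hB0, hBL⟩, ?_, ?_⟩
  · constructor
    · exact heq
    · intro hL
      by_contra hne
      have := hstrictB hne
      linarith
  · constructor
    · intro hL
      by_contra hne
      have h' : w ≠ y := by
        intro hwy
        exact hne (by linarith [hstrictB, le_antisymm (by linarith) hB0])
      have := hstrictB h'
      linarith
    · intro hB
      have h' : w = y := by
        by_contra hne
        have := hstrictB hne
        linarith
      exact heq h'
end

section
/- Let Ω : ℝ^d → ℝ ∪ {∞} be a convex function of Legendre type with dom(Ω*) = ℝ^d. Then for all θ ∈ ℝ^d and all y ∈ dom(Ω), the Fenchel-Young loss equals the Bregman divergence composed with the regularized prediction function: L_Ω(θ; y) = B_Ω(y ‖ ŷ_Ω(θ)), where ŷ_Ω(θ) = ∇Ω*(θ). -/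
open scoped RealInnerProductSpace

/-!
STATEMENT 10: Composite form. Let Ω be convex of Legendre type (strictly convex
on the interior of its nonempty domain D, differentiable there with gradient
`gradΩ`, exploding gradient at the boundary) with dom(Ω*) = ℝ^d, encoded by the
everywhere-attained interior maximizer `yΩ θ = ŷ_Ω(θ) = ∇Ω*(θ)` and attained
conjugate Ω*(θ) = ⟨θ, yΩ θ⟩ − Ω(yΩ θ).  Then for all θ and all y ∈ D,
L_Ω(θ; y) = B_Ω(y ‖ ŷ_Ω(θ)).
-/

theorem fy_statement_10 {d : ℕ}
    (D : Set (EuclideanSpace ℝ (Fin d))) (Ω : EuclideanSpace ℝ (Fin d) → ℝ)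
    (gradΩ : EuclideanSpace ℝ (Fin d) → EuclideanSpace ℝ (Fin d))
    (hDne : D.Nonempty) (hconvΩ : ConvexOn ℝ D Ω)
    (hdiff : ∀ μ ∈ interior D, HasGradientAt Ω (gradΩ μ) μ)
    (hblow : ∀ u : ℕ → EuclideanSpace ℝ (Fin d), (∀ n, u n ∈ D) →
      ∀ x ∈ frontier D, Filter.Tendsto u Filter.atTop (nhds x) →
        Filter.Tendsto (fun n => ‖gradΩ (u n)‖) Filter.atTop Filter.atTop)
    (hstrict : StrictConvexOn ℝ (interior D) Ω)
    (yΩ : EuclideanSpace ℝ (Fin d) → EuclideanSpace ℝ (Fin d))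
    (hyΩ : ∀ θ, yΩ θ ∈ interior D ∧
      ∀ μ ∈ D, ⟪θ, μ⟫ - Ω μ ≤ ⟪θ, yΩ θ⟫ - Ω (yΩ θ))
    (θ : EuclideanSpace ℝ (Fin d)) (y : EuclideanSpace ℝ (Fin d)) (hy : y ∈ D) :
    (⟪θ, yΩ θ⟫ - Ω (yΩ θ)) + Ω y - ⟪θ, y⟫
      = Ω y - Ω (yΩ θ) - ⟪gradΩ (yΩ θ), y - yΩ θ⟫ := by
  obtain ⟨hx, hmax⟩ := hyΩ θ
  set x := yΩ θ with hxdef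
  have hgrad : gradΩ x = θ := by
    have hΩ : HasFDerivAt Ω (InnerProductSpace.toDual ℝ _ (gradΩ x)) x :=
      (hdiff x hx).hasFDerivAt
    have hlin : HasFDerivAt (fun μ : EuclideanSpace ℝ (Fin d) => ⟪θ, μ⟫)
        (InnerProductSpace.toDual ℝ _ θ) x :=
      (InnerProductSpace.toDual ℝ _ θ).hasFDerivAt
    have hf : HasFDerivAt (fun μ => ⟪θ, μ⟫ - Ω μ)
        (InnerProductSpace.toDual ℝ _ θ - InnerProductSpace.toDual ℝ _ (gradΩ x)) x :=
      hlin.sub hΩ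
    have hloc : IsLocalMax (fun μ => ⟪θ, μ⟫ - Ω μ) x := by
      have hD : D ∈ nhds x :=
        Filter.mem_of_superset (isOpen_interior.mem_nhds hx) interior_subset
      exact Filter.eventually_of_mem hD fun μ hμ => hmax μ hμ
    have h0 := hloc.hasFDerivAt_eq_zero hf
    have : InnerProductSpace.toDual ℝ _ θ = InnerProductSpace.toDual ℝ _ (gradΩ x) := by
      rwa [sub_eq_zero] at h0
    exact ((InnerProductSpace.toDual ℝ _).injective this).symm
  rw [hgrad, inner_sub_right]
  ring
end

section
/- Let 𝒴 ⊆ ℝ^d be finite, let Y be a random variable taking values in 𝒴 with distribution p, and let Ω : ℝ^d → ℝ ∪ {∞} with 𝒴 ⊆ dom(Ω) be such that the supremum defining Ω* is attained for all θ ∈ ℝ^d. Then for every θ ∈ ℝ^d, the expected Fenchel-Young loss decomposes as E_p[L_Ω(θ; Y)] = L_Ω(θ; E_p[Y]) + 𝕀_Ω(Y; p), where 𝕀_Ω(Y; p) := E_p[Ω(Y)] − Ω(E_p[Y]) is the Bregman information of Y. Consequently, if Ω is lower semi-continuous proper convex and E_p[Y] ∈ dom(Ω), the pointwise Bayes risk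 equals the Bregman information: inf_{θ ∈ ℝ^d} E_p[L_Ω(θ; Y)] = 𝕀_Ω(Y; p). -/
open Classical

lemma fy_sep {d : ℕ} (D : Set (Fin d → ℝ)) (Ω : (Fin d → ℝ) → ℝ)
    (hDconv : Convex ℝ D) (hΩ : ConvexOn ℝ D Ω)
    (hlsc : LowerSemicontinuous (fun x => if x ∈ D then (Ω x : EReal) else ⊤))
    (μ : Fin d → ℝ) (hμ : μ ∈ D) (ε : ℝ) (hε : 0 < ε) :
    ∃ θ : Fin d → ℝ, ∀ x ∈ D,
      (∑ i, θ i * x i) - Ω x < (∑ i, θ i * μ i) - Ω μ + ε := by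
  set S : Set ((Fin d → ℝ) × ℝ) := {q | q.1 ∈ D ∧ Ω q.1 ≤ q.2} with hS
  have hSconv : Convex ℝ S := hΩ.convex_epigraph
  have hSclosed : IsClosed S := by
    have h1 : IsClosed {q : (Fin d → ℝ) × EReal |
        (if q.1 ∈ D then (Ω q.1 : EReal) else ⊤) ≤ q.2} := hlsc.isClosed_epigraph
    have h2 : Continuous (fun q : (Fin d → ℝ) × ℝ => (q.1, (q.2 : EReal))) :=
      continuous_fst.prodMk (continuous_coe_real_ereal.comp continuous_snd)
    have : S = (fun q : (Fin d → ℝ) × ℝ => (q.1, (q.2 : EReal))) ⁻¹'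
        {q : (Fin d → ℝ) × EReal | (if q.1 ∈ D then (Ω q.1 : EReal) else ⊤) ≤ q.2} := by
      ext ⟨x, t⟩
      by_cases hx : x ∈ D <;> simp [hS, hx, EReal.coe_le_coe_iff]
    rw [this]
    exact h1.preimage h2
  have hq : (μ, Ω μ - ε) ∉ S := by
    simp only [hS, Set.mem_setOf_eq, not_and]
    intro _
    linarith
  obtain ⟨f, u, hfa, hfq⟩ := geometric_hahn_banach_closed_point hSconv hSclosed hq
  have hdec : ∀ (x : Fin d → ℝ) (t : ℝ),
      f (x, t) = (∑ i, x i * f (Pi.single i 1, 0)) + t * f (0, 1) := by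
    intro x t
    have hterm : ∀ i, f (x i • (((Pi.single i 1 : Fin d → ℝ)), (0:ℝ)))
        = x i * f ((Pi.single i 1 : Fin d → ℝ), (0:ℝ)) := by
      intro i
      rw [map_smul, smul_eq_mul]
    have hx : (x, t) = (∑ i, x i • ((Pi.single i 1 : Fin d → ℝ), (0:ℝ)))
        + t • ((0 : Fin d → ℝ), (1:ℝ)) := by
      refine Prod.ext ?_ ?_
      · simp only [Prod.fst_add, Prod.fst_sum, Prod.smul_mk]
        ext j
        simp [Finset.sum_apply, Pi.single_apply, Finset.sum_ite_eq', mul_comm]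
      · simp [Prod.snd_add, Prod.snd_sum]
    rw [hx, map_add, map_sum, map_smul]
    simp only [smul_eq_mul]
    congr 1
    exact Finset.sum_congr rfl fun i _ => hterm i
  set c : ℝ := f (0, 1) with hc
  have hcle : c ≤ 0 := by
    by_contra h
    push_neg at h
    have hlt : ∀ n : ℕ, (∑ i, μ i * f (Pi.single i 1, 0)) + (Ω μ + n) * c < u := by
      intro n
      have := hfa (μ, Ω μ + n) ⟨hμ, le_add_of_nonneg_right (Nat.cast_nonneg n)⟩
      rwa [hdec] at this
    obtain ⟨n, hn⟩ := exists_nat_gt ((u - (∑ i, μ i * f (Pi.single i 1, 0)) - Ω μ * c) / c)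
    have := hlt n
    rw [div_lt_iff₀ h] at hn
    nlinarith
  have h1 : (∑ i, μ i * f (Pi.single i 1, 0)) + Ω μ * c < u := by
    have := hfa (μ, Ω μ) ⟨hμ, le_refl _⟩
    rwa [hdec] at this
  have h2 : u < (∑ i, μ i * f (Pi.single i 1, 0)) + (Ω μ - ε) * c := by
    have := hfq; rwa [hdec] at this
  have hcneg : c < 0 := by
    rcases lt_or_eq_of_le hcle with h | h
    · exact h
    rw [h] at h1 h2
    simp only [mul_zero, add_zero] at h1 h2
    linarith
  set b : ℝ := -c with hb
  have hbpos : 0 < b := by simp [hb]; linarith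
  refine ⟨fun i => f (Pi.single i 1, 0) / b, fun x hx => ?_⟩
  have h1x : (∑ i, x i * f (Pi.single i 1, 0)) + Ω x * c < u := by
    have := hfa (x, Ω x) ⟨hx, le_refl _⟩
    rwa [hdec] at this
  have e1 : ∀ z : Fin d → ℝ, (∑ i, (f (Pi.single i 1, 0) / b) * z i)
      = (∑ i, z i * f (Pi.single i 1, 0)) / b := by
    intro z
    rw [Finset.sum_div]
    exact Finset.sum_congr rfl fun i _ => by ring
  rw [e1, e1]
  have hA : (∑ i, x i * f (Pi.single i 1, 0)) / b * b = ∑ i, x i * f (Pi.single i 1, 0) :=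
    div_mul_cancel₀ _ (ne_of_gt hbpos)
  have hB : (∑ i, μ i * f (Pi.single i 1, 0)) / b * b = ∑ i, μ i * f (Pi.single i 1, 0) :=
    div_mul_cancel₀ _ (ne_of_gt hbpos)
  have hcb : c = -b := by simp [hb]
  nlinarith [h1x, h2, hA, hB, hbpos]

open Classical in
theorem fy_statement_12 {d : ℕ}
    (D : Set (Fin d → ℝ)) (Ω : (Fin d → ℝ) → ℝ)
    (𝒴 : Finset (Fin d → ℝ)) (h𝒴ne : 𝒴.Nonempty) (h𝒴D : ↑𝒴 ⊆ D)
    (p : (Fin d → ℝ) → ℝ) (hp0 : ∀ y ∈ 𝒴, 0 ≤ p y) (hp1 : ∑ y ∈ 𝒴, p y = 1)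
    (yhat : (Fin d → ℝ) → (Fin d → ℝ))
    (hyhat : ∀ θ, yhat θ ∈ D ∧ ∀ μ ∈ D,
      (∑ i, θ i * μ i) - Ω μ ≤ (∑ i, θ i * yhat θ i) - Ω (yhat θ))
    (conj : (Fin d → ℝ) → ℝ)
    (hconj : ∀ θ, conj θ = (∑ i, θ i * yhat θ i) - Ω (yhat θ)) :
    (∀ θ : Fin d → ℝ,
      ∑ y ∈ 𝒴, p y * (conj θ + Ω y - ∑ i, θ i * y i)
        = (conj θ + Ω (∑ y ∈ 𝒴, p y • y) - ∑ i, θ i * (∑ y ∈ 𝒴, p y • y) i)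
          + ((∑ y ∈ 𝒴, p y * Ω y) - Ω (∑ y ∈ 𝒴, p y • y))) ∧
    (D.Nonempty → Convex ℝ D → ConvexOn ℝ D Ω →
      LowerSemicontinuous (fun x => if x ∈ D then (Ω x : EReal) else ⊤) →
      (∑ y ∈ 𝒴, p y • y) ∈ D →
      sInf (Set.range fun θ : Fin d → ℝ =>
          ∑ y ∈ 𝒴, p y * (conj θ + Ω y - ∑ i, θ i * y i))
        = (∑ y ∈ 𝒴, p y * Ω y) - Ω (∑ y ∈ 𝒴, p y • y)) := by
  have key : ∀ θ : Fin d → ℝ,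
      ∑ y ∈ 𝒴, p y * (conj θ + Ω y - ∑ i, θ i * y i)
        = conj θ + (∑ y ∈ 𝒴, p y * Ω y) - ∑ i, θ i * (∑ y ∈ 𝒴, p y • y) i := by
    intro θ
    have hμ : ∑ i, θ i * (∑ y ∈ 𝒴, p y • y) i = ∑ y ∈ 𝒴, p y * ∑ i, θ i * y i := by
      simp only [Finset.sum_apply, Pi.smul_apply, smul_eq_mul, Finset.mul_sum]
      rw [Finset.sum_comm]
      exact Finset.sum_congr rfl fun y _ => Finset.sum_congr rfl fun i _ => by ring
    rw [hμ]
    simp only [mul_sub, mul_add, Finset.sum_sub_distrib, Finset.sum_add_distrib,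
      ← Finset.sum_mul, hp1, one_mul]
  constructor
  · intro θ
    rw [key θ]
    ring
  · intro _hDne hDconv hΩconv hlsc hμD
    set μ : Fin d → ℝ := ∑ y ∈ 𝒴, p y • y with hμdef
    set I : ℝ := (∑ y ∈ 𝒴, p y * Ω y) - Ω μ with hI
    have hlow : ∀ θ : Fin d → ℝ,
        I ≤ ∑ y ∈ 𝒴, p y * (conj θ + Ω y - ∑ i, θ i * y i) := by
      intro θ
      rw [key θ]
      have h := (hyhat θ).2 μ hμD
      rw [← hconj θ] at h
      simp only [hI]
      linarith
    have hbdd : BddBelow (Set.range fun θ : Fin d → ℝ =>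
        ∑ y ∈ 𝒴, p y * (conj θ + Ω y - ∑ i, θ i * y i)) := by
      refine ⟨I, ?_⟩
      rintro b ⟨θ, rfl⟩
      exact hlow θ
    have hne : (Set.range fun θ : Fin d → ℝ =>
        ∑ y ∈ 𝒴, p y * (conj θ + Ω y - ∑ i, θ i * y i)).Nonempty :=
      ⟨_, ⟨0, rfl⟩⟩
    refine le_antisymm ?_ (le_csInf hne (by rintro b ⟨θ, rfl⟩; exact hlow θ))
    rw [Real.sInf_le_iff hbdd hne]
    intro ε hε
    obtain ⟨θ, hθ⟩ := fy_sep D Ω hDconv hΩconv hlsc μ hμD ε hε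
    refine ⟨_, ⟨θ, rfl⟩, ?_⟩
    show ∑ y ∈ 𝒴, p y * (conj θ + Ω y - ∑ i, θ i * y i) < I + ε
    rw [key θ]
    have h := hθ (yhat θ) (hyhat θ).1
    rw [← hconj θ] at h
    simp only [hI] at *
    linarith
end

section
/- Let H : Δ^d → ℝ be a generalized entropy satisfying assumptions A.1–A.3, and let L_{−H}(θ; e_k) := (−H)*(θ) + (−H)(e_k) − θ_k = (−H)*(θ) − θ_k be the induced Fenchel-Young loss. Then: (1) L_{−H} has the separation margin property if and only if there exists m > 0 such that m·e_k ∈ ∂(−H)(e_k); and (2) in that case, the margin of L_{−H} equals the smallest such m, and is given by margin(L_{−H}) = sup_{p ∈ Δ^d} H(p)/(1 − ‖p‖_∞). -/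
/-!
STATEMENT 14: Separation margin of L_{−H}. For a generalized entropy H
satisfying A.1–A.3 and the loss L_{−H}(θ; e_k) = (−H)*(θ) − θ_k:
(1) L_{−H} has the separation margin property iff there is m > 0 with
m·e_k ∈ ∂(−H)(e_k);
(2) in that case the margin (the least valid m) equals
sup_{p ∈ Δ} H(p) / (1 − ‖p‖_∞).  (Here ‖·‖ is the sup norm on Fin d → ℝ.)
-/

noncomputable section

/-- Dot product on ℝ^d. -/
def dot {d : ℕ} (x y : Fin d → ℝ) : ℝ := ∑ i, x i * y i

/-- The standard basis vector e_k. -/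
def vertex {d : ℕ} (k : Fin d) : Fin d → ℝ := fun j => if j = k then 1 else 0

/-- Subdifferential of Ω := −H + I_Δ at a point q of the simplex. -/
def subdiffNegH {d : ℕ} (H : (Fin d → ℝ) → ℝ) (q : Fin d → ℝ) :
    Set (Fin d → ℝ) :=
  {θ | ∀ p ∈ stdSimplex ℝ (Fin d), -H q + dot θ (p - q) ≤ -H p}

/-- Conjugate (−H)*(θ) = sup_{p ∈ Δ} ⟨θ, p⟩ + H(p). -/
def conjNegH {d : ℕ} (H : (Fin d → ℝ) → ℝ) (θ : Fin d → ℝ) : ℝ :=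
  sSup ((fun p => dot θ p + H p) '' stdSimplex ℝ (Fin d))

/-- The loss L_{−H} has a separation margin m: whenever θ_k ≥ m + θ_j for all
j ≠ k, the loss L_{−H}(θ; e_k) = (−H)*(θ) − θ_k vanishes. -/
def marginProp {d : ℕ} (H : (Fin d → ℝ) → ℝ) (m : ℝ) : Prop :=
  ∀ (θ : Fin d → ℝ) (k : Fin d),
    (∀ j, j ≠ k → θ j + m ≤ θ k) → conjNegH H θ - θ k = 0

namespace FY14

variable {d : ℕ}

lemma vertex_mem (k : Fin d) : vertex k ∈ stdSimplex ℝ (Fin d) := by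
  constructor
  · intro i
    unfold vertex
    split <;> norm_num
  · simp [vertex]

lemma dot_vertex (θ : Fin d → ℝ) (k : Fin d) : dot θ (vertex k) = θ k := by
  simp [dot, vertex, mul_ite]

lemma sum_smul_vertex (p : Fin d → ℝ) : ∑ i, p i • vertex i = p := by
  funext j
  simp [vertex, Finset.sum_apply, mul_ite, eq_comm]

lemma coord_le_one {p : Fin d → ℝ} (hp : p ∈ stdSimplex ℝ (Fin d)) (i : Fin d) :
    p i ≤ 1 := by
  have := Finset.single_le_sum (f := p) (fun j _ => hp.1 j) (Finset.mem_univ i)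
  rw [hp.2] at this; exact this

lemma coord_le_norm {p : Fin d → ℝ} (hp : p ∈ stdSimplex ℝ (Fin d)) (k : Fin d) :
    p k ≤ ‖p‖ := by
  calc p k ≤ |p k| := le_abs_self _
  _ = ‖p k‖ := (Real.norm_eq_abs _).symm
  _ ≤ ‖p‖ := norm_le_pi_norm p k

lemma norm_le_one {p : Fin d → ℝ} (hp : p ∈ stdSimplex ℝ (Fin d)) : ‖p‖ ≤ 1 := by
  refine (pi_norm_le_iff_of_nonneg zero_le_one).2 fun i => ?_
  rw [Real.norm_eq_abs, abs_of_nonneg (hp.1 i)]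
  exact coord_le_one hp i

lemma exists_norm_coord (hd : 2 ≤ d) {p : Fin d → ℝ} (hp : p ∈ stdSimplex ℝ (Fin d)) :
    ∃ k, ‖p‖ = p k := by
  have hne : (Finset.univ : Finset (Fin d)).Nonempty := ⟨⟨0, by omega⟩, Finset.mem_univ _⟩
  obtain ⟨i, _, hi⟩ := Finset.exists_mem_eq_sup Finset.univ hne (fun b => ‖p b‖₊)
  refine ⟨i, ?_⟩
  rw [Pi.norm_def, hi]
  simp [Real.norm_eq_abs, abs_of_nonneg (hp.1 i)]

lemma norm_one_vertex (hd : 2 ≤ d) {p : Fin d → ℝ} (hp : p ∈ stdSimplex ℝ (Fin d))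
    (h1 : ‖p‖ = 1) : ∃ k, p = vertex k := by
  obtain ⟨k, hk⟩ := exists_norm_coord hd hp
  rw [h1] at hk
  refine ⟨k, ?_⟩
  have hsum := hp.2
  have herase : ∑ j ∈ Finset.univ.erase k, p j = 0 := by
    rw [← Finset.sum_erase_add Finset.univ p (Finset.mem_univ k)] at hsum
    linarith
  have hzero : ∀ j ∈ Finset.univ.erase k, p j = 0 := by
    intro j hj
    exact (Finset.sum_eq_zero_iff_of_nonneg (fun j _ => hp.1 j)).1 herase j hj
  funext j
  unfold vertex
  by_cases hjk : j = k
  · simp [hjk, ← hk]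
  · simp [hjk]
    exact hzero j (Finset.mem_erase.2 ⟨hjk, Finset.mem_univ j⟩)

variable (H : (Fin d → ℝ) → ℝ)

lemma H_nonneg (hA1 : ∀ k : Fin d, H (vertex k) = 0)
    (hA2c : ConcaveOn ℝ (stdSimplex ℝ (Fin d)) H)
    {p : Fin d → ℝ} (hp : p ∈ stdSimplex ℝ (Fin d)) : 0 ≤ H p := by
  have := hA2c.le_map_sum (t := Finset.univ) (w := p) (p := vertex)
    (fun i _ => hp.1 i) hp.2 (fun i _ => vertex_mem i)
  rw [sum_smul_vertex] at this
  simpa [hA1] using this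

lemma H_bdd (hd : 2 ≤ d) (hA1 : ∀ k : Fin d, H (vertex k) = 0)
    (hA2c : ConcaveOn ℝ (stdSimplex ℝ (Fin d)) H) :
    ∃ C, ∀ p ∈ stdSimplex ℝ (Fin d), H p ≤ C := by
  have hd0 : (0:ℝ) < d := by positivity
  have hd1 : (1:ℝ) ≤ (d:ℝ) - 1 := by
    have : (2:ℝ) ≤ d := by exact_mod_cast hd
    linarith
  set c : Fin d → ℝ := fun _ => (d:ℝ)⁻¹ with hc
  have hcmem : c ∈ stdSimplex ℝ (Fin d) := by
    constructor
    · intro i; positivity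
    · simp [hc, Finset.sum_const]
      field_simp
  refine ⟨d * H c, fun p hp => ?_⟩
  set r : Fin d → ℝ := fun i => (1 - p i) / ((d:ℝ) - 1) with hr
  have hrmem : r ∈ stdSimplex ℝ (Fin d) := by
    constructor
    · intro i
      have := coord_le_one hp i
      have : 0 ≤ 1 - p i := by linarith
      positivity
    · simp only [hr]
      rw [← Finset.sum_div, Finset.sum_sub_distrib, hp.2, Finset.sum_const]
      simp
      field_simp
      intro h; linarith
  have hcomb : ((d:ℝ)⁻¹) • p + (1 - (d:ℝ)⁻¹) • r = c := by
    funext i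
    simp only [Pi.add_apply, Pi.smul_apply, smul_eq_mul, hr, hc]
    field_simp
    ring
  have hdinv1 : (d:ℝ)⁻¹ ≤ 1 := by
    rw [inv_le_one_iff₀]; right; linarith
  have hconc : (d:ℝ)⁻¹ • H p + (1 - (d:ℝ)⁻¹) • H r
      ≤ H ((d:ℝ)⁻¹ • p + (1 - (d:ℝ)⁻¹) • r) :=
    hA2c.2 hp hrmem (by positivity) (by linarith) (by ring)
  rw [hcomb] at hconc
  simp only [smul_eq_mul] at hconc
  have hHr : 0 ≤ H r := H_nonneg H hA1 hA2c hrmem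
  have hdi : (0:ℝ) < (d:ℝ)⁻¹ := by positivity
  have hmul : (d:ℝ)⁻¹ * H p ≤ H c := by nlinarith
  have hdd : (d:ℝ) * (d:ℝ)⁻¹ = 1 := mul_inv_cancel₀ (ne_of_gt hd0)
  have hstep := mul_le_mul_of_nonneg_left hmul hd0.le
  calc H p = ((d:ℝ) * (d:ℝ)⁻¹) * H p := by rw [hdd, one_mul]
  _ = (d:ℝ) * ((d:ℝ)⁻¹ * H p) := by ring
  _ ≤ (d:ℝ) * H c := hstep

lemma conj_bdd (hd : 2 ≤ d) (hA1 : ∀ k : Fin d, H (vertex k) = 0)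
    (hA2c : ConcaveOn ℝ (stdSimplex ℝ (Fin d)) H) (θ : Fin d → ℝ) :
    BddAbove ((fun p => dot θ p + H p) '' stdSimplex ℝ (Fin d)) := by
  obtain ⟨C, hC⟩ := H_bdd H hd hA1 hA2c
  refine ⟨(∑ i, |θ i|) + C, ?_⟩
  rintro x ⟨p, hp, rfl⟩
  have hdot : dot θ p ≤ ∑ i, |θ i| := by
    unfold dot
    apply Finset.sum_le_sum
    intro i _
    calc θ i * p i ≤ |θ i| * p i := mul_le_mul_of_nonneg_right (le_abs_self _) (hp.1 i)
    _ ≤ |θ i| * 1 := mul_le_mul_of_nonneg_left (coord_le_one hp i) (abs_nonneg _)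
    _ = |θ i| := mul_one _
  have := hC p hp
  simp only
  linarith

lemma margin_iff (hd : 2 ≤ d) (hA1 : ∀ k : Fin d, H (vertex k) = 0)
    (hA2c : ConcaveOn ℝ (stdSimplex ℝ (Fin d)) H) (m : ℝ) :
    marginProp H m ↔ ∀ p ∈ stdSimplex ℝ (Fin d), ∀ k, H p ≤ m * (1 - p k) := by
  constructor
  · intro h p hp k
    have hcond : ∀ j, j ≠ k → (m • vertex k) j + m ≤ (m • vertex k) k := by
      intro j hj
      simp [vertex, hj]
    have hconj := h (m • vertex k) k hcond
    have hvk : (m • vertex k) k = m := by simp [vertex]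
    have hmem : dot (m • vertex k) p + H p ∈
        (fun p => dot (m • vertex k) p + H p) '' stdSimplex ℝ (Fin d) := ⟨p, hp, rfl⟩
    have hle := le_csSup (conj_bdd H hd hA1 hA2c (m • vertex k)) hmem
    rw [show sSup ((fun p => dot (m • vertex k) p + H p) '' stdSimplex ℝ (Fin d))
        = conjNegH H (m • vertex k) from rfl] at hle
    have hdot : dot (m • vertex k) p = m * p k := by
      simp [dot, vertex, mul_ite, ite_mul, mul_comm]
    rw [hdot] at hle
    rw [hvk] at hconj
    nlinarith
  · intro h θ k hθ
    have hub : ∀ x ∈ (fun p => dot θ p + H p) '' stdSimplex ℝ (Fin d), x ≤ θ k := by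
      rintro x ⟨p, hp, rfl⟩
      have h1 := h p hp k
      have e1 : ∑ j, (if j = k then (0:ℝ) else m * p j) = m * (1 - p k) := by
        have step : ∀ j : Fin d, (if j = k then (0:ℝ) else m * p j)
            = m * p j - (if j = k then m * p j else 0) := by
          intro j; split <;> ring
        simp_rw [step, Finset.sum_sub_distrib, Finset.sum_ite_eq' Finset.univ k,
          ← Finset.mul_sum, hp.2]
        simp
        ring
      have key : dot θ p + m * (1 - p k) ≤ θ k := by
        have expand : dot θ p + m * (1 - p k)
            = ∑ j, (θ j * p j + (if j = k then (0:ℝ) else m * p j)) := by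
          rw [Finset.sum_add_distrib, e1]; rfl
        have bound : ∑ j, (θ j * p j + (if j = k then (0:ℝ) else m * p j))
            ≤ ∑ j, θ k * p j := by
          apply Finset.sum_le_sum
          intro j _
          by_cases hjk : j = k
          · subst hjk; simp
          · rw [if_neg hjk]
            have := hθ j hjk
            nlinarith [hp.1 j]
        rw [expand]
        calc ∑ j, (θ j * p j + (if j = k then (0:ℝ) else m * p j)) ≤ ∑ j, θ k * p j := bound
        _ = θ k * ∑ j, p j := by rw [Finset.mul_sum]
        _ = θ k := by rw [hp.2, mul_one]
      show dot θ p + H p ≤ θ k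
      linarith
    have hne : ((fun p => dot θ p + H p) '' stdSimplex ℝ (Fin d)).Nonempty :=
      ⟨_, ⟨vertex k, vertex_mem k, rfl⟩⟩
    have hupper : conjNegH H θ ≤ θ k := csSup_le hne hub
    have hmemk : (fun p => dot θ p + H p) (vertex k) ∈
        (fun p => dot θ p + H p) '' stdSimplex ℝ (Fin d) := ⟨vertex k, vertex_mem k, rfl⟩
    have hlower : θ k ≤ conjNegH H θ := by
      have := le_csSup (conj_bdd H hd hA1 hA2c θ) hmemk
      simp [dot_vertex, hA1] at this
      exact this
    linarith

lemma subdiff_iff (hA1 : ∀ k : Fin d, H (vertex k) = 0) (m : ℝ) (k : Fin d) :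
    m • vertex k ∈ subdiffNegH H (vertex k) ↔
      ∀ p ∈ stdSimplex ℝ (Fin d), H p ≤ m * (1 - p k) := by
  have hdot : ∀ p : Fin d → ℝ, dot (m • vertex k) (p - vertex k) = m * (p k - 1) := by
    intro p
    unfold dot vertex
    rw [Finset.sum_eq_single k]
    · simp
    · intro b _ hb; simp [hb]
    · simp
  unfold subdiffNegH
  simp only [Set.mem_setOf_eq, hA1 k, neg_zero, zero_add, hdot]
  constructor <;> intro h p hp <;> have := h p hp <;> linarith

end FY14

open FY14 in
theorem fy_statement_14 {d : ℕ} (hd : 2 ≤ d) (H : (Fin d → ℝ) → ℝ)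
    (hA1 : ∀ k : Fin d, H (vertex k) = 0)
    (hA2 : StrictConcaveOn ℝ (stdSimplex ℝ (Fin d)) H)
    (hA3 : ∀ σ : Equiv.Perm (Fin d), ∀ p ∈ stdSimplex ℝ (Fin d),
      H (fun i => p (σ i)) = H p) :
    ((∃ m > (0 : ℝ), marginProp H m) ↔
      (∃ m > (0 : ℝ), ∀ k : Fin d, m • vertex k ∈ subdiffNegH H (vertex k))) ∧
    ((∃ m > (0 : ℝ), marginProp H m) →
      IsLeast {m : ℝ | 0 < m ∧ marginProp H m}
        (sSup ((fun p => H p / (1 - ‖p‖)) '' stdSimplex ℝ (Fin d)))) := by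
  have hA2c := hA2.concaveOn
  constructor
  · constructor
    · rintro ⟨m, hm, h⟩
      exact ⟨m, hm, fun k => (subdiff_iff H hA1 m k).2
        fun p hp => (margin_iff H hd hA1 hA2c m).1 h p hp k⟩
    · rintro ⟨m, hm, h⟩
      exact ⟨m, hm, (margin_iff H hd hA1 hA2c m).2
        fun p hp k => (subdiff_iff H hA1 m k).1 (h k) p hp⟩
  · rintro ⟨m₀, hm₀, h₀⟩
    set T := (fun p => H p / (1 - ‖p‖)) '' stdSimplex ℝ (Fin d) with hT
    -- any valid positive margin bounds T from above
    have hub : ∀ m : ℝ, 0 ≤ m → marginProp H m → ∀ x ∈ T, x ≤ m := by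
      intro m hm hmm x hx
      obtain ⟨p, hp, rfl⟩ := hx
      rcases lt_or_eq_of_le (norm_le_one hp) with hlt | heq
      · obtain ⟨k, hk⟩ := exists_norm_coord hd hp
        have h1 := (margin_iff H hd hA1 hA2c m).1 hmm p hp k
        rw [← hk] at h1
        rw [div_le_iff₀ (by linarith)]
        linarith
      · show H p / (1 - ‖p‖) ≤ m
        rw [heq]
        simp [hm]
    have Tne : T.Nonempty := ⟨_, ⟨vertex ⟨0, by omega⟩, vertex_mem _, rfl⟩⟩
    have Tbdd : BddAbove T := ⟨m₀, hub m₀ (le_of_lt hm₀) h₀⟩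
    set M := sSup T with hM
    -- M is positive
    have hMpos : 0 < M := by
      set k0 : Fin d := ⟨0, by omega⟩
      set k1 : Fin d := ⟨1, by omega⟩
      have hk01 : k0 ≠ k1 := by simp [k0, k1, Fin.ext_iff]
      set q : Fin d → ℝ := (1/2 : ℝ) • vertex k0 + (1/2 : ℝ) • vertex k1 with hq
      have hqmem : q ∈ stdSimplex ℝ (Fin d) :=
        (convex_stdSimplex ℝ (Fin d)) (vertex_mem k0) (vertex_mem k1)
          (by norm_num) (by norm_num) (by norm_num)
      have hvne : vertex k0 ≠ vertex k1 := by
        intro hcontr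
        have := congrFun hcontr k0
        simp [vertex, hk01] at this
      have hHq : 0 < H q := by
        have := hA2.2 (vertex_mem k0) (vertex_mem k1) hvne
          (by norm_num : (0:ℝ) < 1/2) (by norm_num : (0:ℝ) < 1/2) (by norm_num)
        simpa [hA1, hq] using this
      have hqnorm : ‖q‖ ≤ 1/2 := by
        refine (pi_norm_le_iff_of_nonneg (by norm_num)).2 fun i => ?_
        simp only [hq, Pi.add_apply, Pi.smul_apply, smul_eq_mul, vertex,
          Real.norm_eq_abs]
        rcases eq_or_ne i k0 with h0 | h0 <;> rcases eq_or_ne i k1 with h1 | h1 <;>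
          simp [h0, h1, hk01, hk01.symm, Ne.symm] <;>
          first | (exfalso; exact hk01 (h0 ▸ h1)) | norm_num [abs_le]
      have hratio : 0 < H q / (1 - ‖q‖) := div_pos hHq (by linarith)
      have : H q / (1 - ‖q‖) ≤ M := le_csSup Tbdd ⟨q, hqmem, rfl⟩
      linarith
    -- M is a valid margin
    have hMmargin : marginProp H M := by
      refine (margin_iff H hd hA1 hA2c M).2 fun p hp k => ?_
      have h1 : H p ≤ M * (1 - ‖p‖) := by
        rcases lt_or_eq_of_le (norm_le_one hp) with hlt | heq
        · have := le_csSup Tbdd (⟨p, hp, rfl⟩ : H p / (1 - ‖p‖) ∈ T)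
          rw [div_le_iff₀ (by linarith)] at this
          linarith
        · obtain ⟨j, hj⟩ := norm_one_vertex hd hp heq
          rw [heq, hj, hA1 j]
          simp
      have h2 : M * (1 - ‖p‖) ≤ M * (1 - p k) := by
        have := coord_le_norm hp k
        nlinarith [hMpos.le]
      linarith
    refine ⟨⟨hMpos, hMmargin⟩, ?_⟩
    rintro m ⟨hm, hmm⟩
    exact csSup_le Tne (hub m hm.le hmm)
end
end

section
/- Let H : Δ^d → ℝ satisfy assumptions A.1–A.3 and be uniformly separable, i.e. H(p) = Σ_{i=1}^d h(p_i) for a concave h : [0,1] → ℝ_+ with h(0) = h(1) = 0. Then the following three statements are equivalent: (1) ∂(−H)(p) ≠ ∅ for every p ∈ Δ^d; (2) the gradient map ∇(−H)* covers the full simplex: ∇(−H)*(ℝ^d) = Δ^d; (3) the Fenchel-Young loss L_{−H} has the separation margin property. For a general H (not necessarily separable) satisfying A.1–A.3, (1) ⟺ (2) ⟹ (3). -/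
/-!
STATEMENT 15: Sparsity and margins. For a generalized entropy H satisfying
A.1–A.3, consider:
(1) ∂(−H)(p) ≠ ∅ for all p in the simplex;
(2) the prediction map covers the full simplex, i.e. every p ∈ Δ is the
regularized prediction ∇(−H)*(θ) (the maximizer of ⟨θ, q⟩ + H(q) over Δ) for
some θ ∈ ℝ^d;
(3) L_{−H} has the separation margin property.
Then (1) ⟺ (2) ⟹ (3), and if H is uniformly separable, H(p) = Σ_i h(p_i) with
h : [0,1] → ℝ_+ concave and h(0) = h(1) = 0, all three are equivalent.
-/

noncomputable section
open Finset

lemma dot_sub' {d : ℕ} (θ p q : Fin d → ℝ) : dot θ (p - q) = dot θ p - dot θ q := by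
  simp [dot, mul_sub, Finset.sum_sub_distrib]

lemma vertex_mem {d : ℕ} (k : Fin d) : vertex k ∈ stdSimplex ℝ (Fin d) := by
  constructor
  · intro i; by_cases h : i = k <;> simp [vertex, h]
  · simp [vertex]

lemma dot_vertex {d : ℕ} (θ : Fin d → ℝ) (k : Fin d) : dot θ (vertex k) = θ k := by
  simp [dot, vertex, mul_ite]

lemma mem_subdiff_iff {d : ℕ} (H : (Fin d → ℝ) → ℝ) (p θ : Fin d → ℝ) :
    θ ∈ subdiffNegH H p ↔ ∀ q ∈ stdSimplex ℝ (Fin d), dot θ q + H q ≤ dot θ p + H p := by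
  constructor <;> intro hθ q hq <;> have := hθ q hq <;> rw [dot_sub'] at * <;> linarith

lemma coord_le_one {d : ℕ} {p : Fin d → ℝ} (hp : p ∈ stdSimplex ℝ (Fin d)) (i : Fin d) :
    p i ≤ 1 := by
  have := Finset.single_le_sum (f := p) (fun j _ => hp.1 j) (Finset.mem_univ i)
  rwa [hp.2] at this

lemma exists_supergrad (h : ℝ → ℝ) (m : ℝ)
    (hconc : ConcaveOn ℝ (Set.Icc (0:ℝ) 1) h)
    (h0 : 0 ≤ h 0) (h1 : 0 ≤ h 1)
    (ht1 : ∀ t ∈ Set.Icc (0:ℝ) 1, h t ≤ m * t)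
    (ht2 : ∀ t ∈ Set.Icc (0:ℝ) 1, h t ≤ m * (1 - t))
    (x : ℝ) (hx : x ∈ Set.Icc (0:ℝ) 1) :
    ∃ g : ℝ, ∀ t ∈ Set.Icc (0:ℝ) 1, h t ≤ h x + g * (t - x) := by
  obtain ⟨hx0, hx1⟩ := hx
  by_cases hxe : x = 1
  · refine ⟨-m, fun t ht => ?_⟩
    subst hxe
    have := ht2 t ht
    nlinarith
  · have hx1' : x < 1 := lt_of_le_of_ne hx1 hxe
    set S : Set ℝ := (fun t => (h t - h x) / (t - x)) '' Set.Ioc x 1 with hS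
    have hne : S.Nonempty := ⟨_, ⟨1, ⟨hx1', le_refl 1⟩, rfl⟩⟩
    have hub : ∀ s ∈ S, s ≤ m := by
      rintro s ⟨t, ⟨hxt, ht1'⟩, rfl⟩
      have htpos : 0 < t - x := by linarith
      rw [div_le_iff₀ htpos]
      rcases eq_or_lt_of_le hx0 with hx0' | hx0'
      · have := ht1 t ⟨by linarith, ht1'⟩
        rw [← hx0'] at *
        nlinarith
      · have hsl := hconc.slope_anti_adjacent (x := 0) (y := x) (z := t)
          (Set.left_mem_Icc.2 zero_le_one) ⟨by linarith, ht1'⟩ hx0' hxt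
        have hhx := ht1 x ⟨hx0, hx1⟩
        have h2 : (h x - h 0) / (x - 0) ≤ m := by
          rw [div_le_iff₀ (by linarith)]
          nlinarith
        calc h t - h x ≤ ((h x - h 0)/(x-0)) * (t - x) := by
              rw [← div_le_iff₀ htpos]; exact hsl
          _ ≤ m * (t - x) := by nlinarith
    have hbdd : BddAbove S := ⟨m, hub⟩
    refine ⟨sSup S, fun t ht => ?_⟩
    rcases lt_trichotomy t x with hlt | heq | hgt
    · have hle : sSup S ≤ (h x - h t) / (x - t) := by
        apply csSup_le hne
        rintro s ⟨u, ⟨hxu, hu1⟩, rfl⟩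
        exact hconc.slope_anti_adjacent (x := t) (y := x) (z := u)
          ⟨ht.1, ht.2⟩ ⟨by linarith [ht.1], hu1⟩ hlt hxu
      have hxtpos : 0 < x - t := by linarith
      have h3 : sSup S * (x - t) ≤ h x - h t := by
        have := mul_le_mul_of_nonneg_right hle (le_of_lt hxtpos)
        rwa [div_mul_cancel₀] at this
        linarith
      nlinarith
    · subst heq; simp
    · have hmem : (h t - h x) / (t - x) ∈ S := ⟨t, ⟨hgt, ht.2⟩, rfl⟩
      have hle := le_csSup hbdd hmem
      have hpos : 0 < t - x := by linarith
      have := mul_le_mul_of_nonneg_right hle (le_of_lt hpos)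
      rw [div_mul_cancel₀ _ (by linarith : t - x ≠ 0)] at this
      linarith

theorem fy_statement_15 {d : ℕ} (H : (Fin d → ℝ) → ℝ)
    (hA1 : ∀ k : Fin d, H (vertex k) = 0)
    (hA2 : StrictConcaveOn ℝ (stdSimplex ℝ (Fin d)) H)
    (hA3 : ∀ σ : Equiv.Perm (Fin d), ∀ p ∈ stdSimplex ℝ (Fin d),
      H (fun i => p (σ i)) = H p) :
    ((∀ p ∈ stdSimplex ℝ (Fin d), (subdiffNegH H p).Nonempty) ↔
      (∀ p ∈ stdSimplex ℝ (Fin d), ∃ θ : Fin d → ℝ,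
        ∀ q ∈ stdSimplex ℝ (Fin d), dot θ q + H q ≤ dot θ p + H p)) ∧
    ((∀ p ∈ stdSimplex ℝ (Fin d), (subdiffNegH H p).Nonempty) →
      ∃ m > (0 : ℝ), marginProp H m) ∧
    ((∃ h : ℝ → ℝ, ConcaveOn ℝ (Set.Icc (0 : ℝ) 1) h ∧
        (∀ t ∈ Set.Icc (0 : ℝ) 1, 0 ≤ h t) ∧ h 0 = 0 ∧ h 1 = 0 ∧
        ∀ p ∈ stdSimplex ℝ (Fin d), H p = ∑ i, h (p i)) →
      (∃ m > (0 : ℝ), marginProp H m) →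
      ∀ p ∈ stdSimplex ℝ (Fin d), (subdiffNegH H p).Nonempty) := by
  refine ⟨?_, ?_, ?_⟩
  · -- (1) ↔ (2)
    constructor
    · intro h1 p hp
      obtain ⟨θ, hθ⟩ := h1 p hp
      exact ⟨θ, (mem_subdiff_iff H p θ).mp hθ⟩
    · intro h2 p hp
      obtain ⟨θ, hθ⟩ := h2 p hp
      exact ⟨θ, (mem_subdiff_iff H p θ).mpr hθ⟩
  · -- (1) → (3)
    intro hsub
    set T : Fin d → Fin d → ℝ := fun k => (hsub (vertex k) (vertex_mem k)).some with hT
    have hTs : ∀ k, ∀ q ∈ stdSimplex ℝ (Fin d), dot (T k) q + H q ≤ (T k) k := by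
      intro k q hq
      have := (mem_subdiff_iff H (vertex k) (T k)).mp
        (hsub (vertex k) (vertex_mem k)).some_mem q hq
      rwa [dot_vertex, hA1 k, add_zero] at this
    set m : ℝ := 1 + ∑ k, ∑ j, |T k k - T k j| with hm
    have hmpos : (0:ℝ) < m := by
      have : (0:ℝ) ≤ ∑ k, ∑ j, |T k k - T k j| :=
        Finset.sum_nonneg fun _ _ => Finset.sum_nonneg fun _ _ => abs_nonneg _
      linarith
    have hmge : ∀ k j : Fin d, T k k - T k j ≤ m := by
      intro k j
      have h1 : |T k k - T k j| ≤ ∑ j', |T k k - T k j'| :=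
        Finset.single_le_sum (f := fun j' => |T k k - T k j'|) (fun _ _ => abs_nonneg _) (Finset.mem_univ j)
      have h2 : ∑ j', |T k k - T k j'| ≤ ∑ k', ∑ j', |T k' k' - T k' j'| :=
        Finset.single_le_sum (f := fun k' => ∑ j', |T k' k' - T k' j'|)
          (fun _ _ => Finset.sum_nonneg fun _ _ => abs_nonneg _) (Finset.mem_univ k)
      have := le_abs_self (T k k - T k j)
      linarith
    refine ⟨m, hmpos, ?_⟩
    intro θ k hgap
    have key : ∀ q ∈ stdSimplex ℝ (Fin d), dot θ q + H q ≤ θ k := by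
      intro q hq
      have h0 := hTs k q hq
      have e1 : ∀ ψ : Fin d → ℝ, dot ψ q - ψ k = ∑ j, (ψ j - ψ k) * q j := by
        intro ψ
        simp [dot, sub_mul, Finset.sum_sub_distrib, ← Finset.mul_sum, hq.2]
      have cmp : ∑ j, (θ j - θ k) * q j ≤ ∑ j, (T k j - T k k) * q j := by
        apply Finset.sum_le_sum
        intro j _
        by_cases hj : j = k
        · subst hj; simp
        · have g1 := hgap j hj
          have g2 := hmge k j
          have g3 := hq.1 j
          nlinarith
      have e2 := e1 θ
      have e3 := e1 (T k)
      linarith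
    have hmem : θ k ∈ (fun p => dot θ p + H p) '' stdSimplex ℝ (Fin d) :=
      ⟨vertex k, vertex_mem k, by simp only [dot_vertex, hA1, add_zero]⟩
    have hub : ∀ y ∈ (fun p => dot θ p + H p) '' stdSimplex ℝ (Fin d), y ≤ θ k := by
      rintro y ⟨q, hq, rfl⟩; exact key q hq
    have : conjNegH H θ = θ k :=
      le_antisymm (csSup_le ⟨_, hmem⟩ hub) (le_csSup ⟨θ k, hub⟩ hmem)
    simp [this]
  · -- separable + (3) → (1)
    rintro ⟨h, hconc, hnn, hh0, hh1, hHs⟩ ⟨m, hmpos, hmargin⟩ p hp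
    rcases lt_or_ge d 2 with hd | hd
    · -- d = 0 or 1
      interval_cases d
      · exact absurd hp.2 (by simp)
      · refine ⟨0, ?_⟩
        intro q hq
        have hq0 : q = p := by
          funext i
          have h1 : q 0 = 1 := by simpa using hq.2
          have h2 : p 0 = 1 := by simpa using hp.2
          have : i = 0 := Subsingleton.elim _ _
          rw [this, h1, h2]
        rw [hq0]
        simp [dot_sub', dot]
    · -- d ≥ 2
      have hd0 : 0 < d := by omega
      set i0 : Fin d := ⟨0, by omega⟩ with hi0
      set i1 : Fin d := ⟨1, by omega⟩ with hi1
      have hne01 : i1 ≠ i0 := by simp [hi0, hi1, Fin.ext_iff]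
      set θt : Fin d → ℝ := fun j => if j = i0 then m else 0 with hθt
      have hgap : ∀ j, j ≠ i0 → θt j + m ≤ θt i0 := by
        intro j hj; simp [hθt, hj]
      have hconj := hmargin θt i0 hgap
      have hθti0 : θt i0 = m := by simp [hθt]
      rw [hθti0] at hconj
      have hconj' : conjNegH H θt = m := by linarith
      have hbdd : BddAbove ((fun q => dot θt q + H q) '' stdSimplex ℝ (Fin d)) := by
        by_contra hb
        have h0 := Real.sSup_of_not_bddAbove hb
        rw [conjNegH] at hconj'
        rw [h0] at hconj'
        linarith
      -- key inequality
      have key : ∀ t ∈ Set.Icc (0:ℝ) 1, m * (1 - t) + (h (1 - t) + h t) ≤ m := by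
        intro t ht
        set qt : Fin d → ℝ := fun j => if j = i0 then 1 - t else if j = i1 then t else 0 with hqt
        have hqtm : qt ∈ stdSimplex ℝ (Fin d) := by
          constructor
          · intro j
            simp only [hqt]
            split_ifs
            · linarith [ht.2]
            · exact ht.1
            · exact le_refl 0
          · have he : ∀ j, qt j = (if j = i0 then 1 - t else 0) + (if j = i1 then t else 0) := by
              intro j
              simp only [hqt]
              by_cases h1 : j = i0
              · subst h1
                have hne : i0 ≠ i1 := fun hc => hne01 hc.symm
                simp [hne]
              · by_cases h2 : j = i1 <;> simp [h1, h2, hne01]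
            simp only [he]
            rw [Finset.sum_add_distrib, Finset.sum_ite_eq' univ i0, Finset.sum_ite_eq' univ i1]
            simp
        have hHqt : H qt = h (1 - t) + h t := by
          rw [hHs qt hqtm]
          have he : ∀ j, h (qt j) = (if j = i0 then h (1 - t) else 0) + (if j = i1 then h t else 0) := by
            intro j
            simp only [hqt]
            by_cases h1 : j = i0
            · subst h1
              have : ¬ (i0 = i1) := fun hc => hne01 hc.symm
              simp [this]
            · by_cases h2 : j = i1 <;> simp [h1, h2, hh0, hne01]
          simp only [he]
          rw [Finset.sum_add_distrib, Finset.sum_ite_eq' univ i0, Finset.sum_ite_eq' univ i1]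
          simp
        have hdot : dot θt qt = m * (1 - t) := by
          have he : ∀ j, θt j * qt j = if j = i0 then m * (1 - t) else 0 := by
            intro j
            simp only [hθt, hqt]
            by_cases h1 : j = i0 <;> simp [h1]
          rw [dot]
          simp only [he]
          rw [Finset.sum_ite_eq' univ i0]
          simp
        have hle : dot θt qt + H qt ≤ m := by
          rw [← hconj']
          exact le_csSup hbdd ⟨qt, hqtm, rfl⟩
        rw [hdot, hHqt] at hle
        linarith
      have ht1 : ∀ t ∈ Set.Icc (0:ℝ) 1, h t ≤ m * t := by
        intro t ht
        have hk := key t ht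
        have hn := hnn (1 - t) ⟨by linarith [ht.2], by linarith [ht.1]⟩
        nlinarith
      have ht2 : ∀ t ∈ Set.Icc (0:ℝ) 1, h t ≤ m * (1 - t) := by
        intro t ht
        have hk := key (1 - t) ⟨by linarith [ht.2], by linarith [ht.1]⟩
        rw [sub_sub_cancel] at hk
        have hn := hnn (1 - t) ⟨by linarith [ht.2], by linarith [ht.1]⟩
        linarith
      -- supergradients
      have hsg : ∀ i : Fin d, ∃ g : ℝ, ∀ t ∈ Set.Icc (0:ℝ) 1, h t ≤ h (p i) + g * (t - p i) :=
        fun i => exists_supergrad h m hconc (le_of_eq hh0.symm) (le_of_eq hh1.symm) ht1 ht2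
          (p i) ⟨hp.1 i, coord_le_one hp i⟩
      choose g hg using hsg
      refine ⟨fun i => -(g i), (mem_subdiff_iff _ _ _).mpr ?_⟩
      intro q hq
      rw [hHs q hq, hHs p hp, dot, dot, ← Finset.sum_add_distrib, ← Finset.sum_add_distrib]
      apply Finset.sum_le_sum
      intro i _
      have := hg i (q i) ⟨hq.1 i, coord_le_one hq i⟩
      nlinarith
end
end

section
/- Let 𝒴 ⊆ ℝ^d be a finite set of structured outputs contained in a sphere of radius r (‖y‖ = r for all y ∈ 𝒴, with 𝒴 containing at least two points), and let Ω(μ) := (1/2)‖μ‖² restricted to conv(𝒴). Then the SparseMAP loss, i.e. the Fenchel-Young loss L_Ω generated by Ω, has the structured separation margin property with margin(L_Ω) = 1. -/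
open scoped RealInnerProductSpace

noncomputable section

/-- The convex hull conv(𝒴). -/
def polytope {d : ℕ} (𝒴 : Finset (EuclideanSpace ℝ (Fin d))) :
    Set (EuclideanSpace ℝ (Fin d)) :=
  convexHull ℝ (𝒴 : Set (EuclideanSpace ℝ (Fin d)))

/-- Conjugate Ω*(θ) = sup_{μ ∈ conv(𝒴)} ⟨θ, μ⟩ − Ω(μ). -/
def conjC {d : ℕ} (𝒴 : Finset (EuclideanSpace ℝ (Fin d)))
    (Ω : EuclideanSpace ℝ (Fin d) → ℝ) (θ : EuclideanSpace ℝ (Fin d)) : ℝ :=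
  sSup ((fun μ => ⟪θ, μ⟫ - Ω μ) '' polytope 𝒴)

/-- The Fenchel-Young loss L_Ω(θ; y). -/
def structLoss {d : ℕ} (𝒴 : Finset (EuclideanSpace ℝ (Fin d)))
    (Ω : EuclideanSpace ℝ (Fin d) → ℝ) (θ y : EuclideanSpace ℝ (Fin d)) : ℝ :=
  conjC 𝒴 Ω θ + Ω y - ⟪θ, y⟫

/-- Structured separation margin property with margin m. -/
def structMarginProp {d : ℕ} (𝒴 : Finset (EuclideanSpace ℝ (Fin d)))
    (Ω : EuclideanSpace ℝ (Fin d) → ℝ) (m : ℝ) : Prop :=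
  ∀ θ : EuclideanSpace ℝ (Fin d), ∀ y ∈ 𝒴,
    (∀ y' ∈ 𝒴, ⟪θ, y'⟫ + m / 2 * ‖y - y'‖ ^ 2 ≤ ⟪θ, y⟫) →
    structLoss 𝒴 Ω θ y = 0

theorem fy_statement_18 {d : ℕ} (𝒴 : Finset (EuclideanSpace ℝ (Fin d)))
    (htwo : ∃ y ∈ 𝒴, ∃ y' ∈ 𝒴, y ≠ y')
    (r : ℝ) (hr : ∀ y ∈ 𝒴, ‖y‖ = r) :
    IsLeast {m : ℝ | 0 < m ∧
        structMarginProp 𝒴 (fun μ => 1 / 2 * ‖μ‖ ^ 2) m} 1 := by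
  constructor
  · refine ⟨one_pos, ?_⟩
    intro θ y hy hcond
    have hyr2 : ‖y‖ ^ 2 = r ^ 2 := by rw [hr y hy]
    have h1 : ⟪y, y⟫ = ‖y‖ ^ 2 := real_inner_self_eq_norm_sq y
    have hhalf : (𝒴 : Set (EuclideanSpace ℝ (Fin d))) ⊆
        {μ | ⟪θ - y, μ⟫ ≤ ⟪θ - y, y⟫} := by
      intro y' hy'
      have h := hcond y' hy'
      have hn : ‖y - y'‖ ^ 2 = ‖y‖ ^ 2 - 2 * ⟪y, y'⟫ + ‖y'‖ ^ 2 := norm_sub_sq_real y y'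
      have hy'r2 : ‖y'‖ ^ 2 = r ^ 2 := by rw [hr y' hy']
      simp only [Set.mem_setOf_eq, inner_sub_left]
      linarith [h, hn, h1, hyr2, hy'r2]
    have hhull : polytope 𝒴 ⊆ {μ | ⟪θ - y, μ⟫ ≤ ⟪θ - y, y⟫} :=
      convexHull_min hhalf
        (convex_halfSpace_le
          ⟨fun a b => inner_add_right _ _ _, fun c x => real_inner_smul_right _ _ _⟩ _)
    have hgreat : IsGreatest ((fun μ => ⟪θ, μ⟫ - 1 / 2 * ‖μ‖ ^ 2) '' polytope 𝒴)
        (⟪θ, y⟫ - 1 / 2 * ‖y‖ ^ 2) := by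
      constructor
      · exact ⟨y, subset_convexHull ℝ _ hy, rfl⟩
      · rintro v ⟨μ, hμ, rfl⟩
        have hs := hhull hμ
        simp only [Set.mem_setOf_eq, inner_sub_left] at hs
        have h2 : ⟪μ, μ⟫ = ‖μ‖ ^ 2 := real_inner_self_eq_norm_sq μ
        have h3 : ‖y - μ‖ ^ 2 = ‖y‖ ^ 2 - 2 * ⟪y, μ⟫ + ‖μ‖ ^ 2 := norm_sub_sq_real y μ
        nlinarith [sq_nonneg ‖y - μ‖]
    have hc : conjC 𝒴 (fun μ => 1 / 2 * ‖μ‖ ^ 2) θ = ⟪θ, y⟫ - 1 / 2 * ‖y‖ ^ 2 :=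
      hgreat.csSup_eq
    unfold structLoss
    rw [hc]; ring
  · rintro m ⟨hm, hprop⟩
    by_contra hlt
    push_neg at hlt
    obtain ⟨y, hy, y', hy', hne⟩ := htwo
    set θ : EuclideanSpace ℝ (Fin d) := m • y with hθ
    have h1 : ⟪y, y⟫ = ‖y‖ ^ 2 := real_inner_self_eq_norm_sq y
    have h2 : ⟪y', y'⟫ = ‖y'‖ ^ 2 := real_inner_self_eq_norm_sq y'
    have hyr2 : ‖y‖ ^ 2 = r ^ 2 := by rw [hr y hy]
    have hy'r2 : ‖y'‖ ^ 2 = r ^ 2 := by rw [hr y' hy']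
    have hcond : ∀ y'' ∈ 𝒴, ⟪θ, y''⟫ + m / 2 * ‖y - y''‖ ^ 2 ≤ ⟪θ, y⟫ := by
      intro y'' hy''
      have hn : ‖y - y''‖ ^ 2 = ‖y‖ ^ 2 - 2 * ⟪y, y''⟫ + ‖y''‖ ^ 2 := norm_sub_sq_real y y''
      have hy''r2 : ‖y''‖ ^ 2 = r ^ 2 := by rw [hr y'' hy'']
      rw [hθ, real_inner_smul_left, real_inner_smul_left, hn, hyr2, hy''r2, h1, hyr2]
      have : m * ⟪y, y''⟫ + m / 2 * (r ^ 2 - 2 * ⟪y, y''⟫ + r ^ 2) = m * r ^ 2 := by ring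
      linarith
    have hloss := hprop θ y hy hcond
    unfold structLoss at hloss
    have hconj : conjC 𝒴 (fun μ => 1 / 2 * ‖μ‖ ^ 2) θ = ⟪θ, y⟫ - 1 / 2 * ‖y‖ ^ 2 := by
      simp only at hloss
      linarith
    set t : ℝ := (1 - m) / 2 with ht
    have ht0 : 0 < t := by rw [ht]; linarith
    set μ : EuclideanSpace ℝ (Fin d) := (1 - t) • y + t • y' with hμdef
    have hμmem : μ ∈ polytope 𝒴 :=
      (convex_convexHull ℝ _) (subset_convexHull ℝ _ hy) (subset_convexHull ℝ _ hy')
        (by rw [ht]; linarith) (le_of_lt ht0) (by ring)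
    have hK : IsCompact (polytope 𝒴) := 𝒴.finite_toSet.isCompact_convexHull (𝕜 := ℝ)
    have hcont : Continuous (fun μ : EuclideanSpace ℝ (Fin d) => ⟪θ, μ⟫ - 1 / 2 * ‖μ‖ ^ 2) :=
      (continuous_const.inner continuous_id).sub
        (continuous_const.mul (continuous_norm.pow 2))
    have hbdd : BddAbove ((fun μ : EuclideanSpace ℝ (Fin d) => ⟪θ, μ⟫ - 1 / 2 * ‖μ‖ ^ 2) ''
        polytope 𝒴) := (hK.image hcont).bddAbove
    have hle : ⟪θ, μ⟫ - 1 / 2 * ‖μ‖ ^ 2 ≤ conjC 𝒴 (fun μ => 1 / 2 * ‖μ‖ ^ 2) θ :=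
      le_csSup hbdd ⟨μ, hμmem, rfl⟩
    rw [hconj] at hle
    have hiθμ : ⟪θ, μ⟫ = m * (1 - t) * ⟪y, y⟫ + m * t * ⟪y, y'⟫ := by
      rw [hθ, hμdef]
      simp only [inner_add_right, real_inner_smul_left, real_inner_smul_right]
      ring
    have hiθy : ⟪θ, y⟫ = m * ⟪y, y⟫ := by rw [hθ, real_inner_smul_left]
    have hμμ : ‖μ‖ ^ 2 = (1 - t) ^ 2 * ⟪y, y⟫ + 2 * t * (1 - t) * ⟪y, y'⟫
        + t ^ 2 * ⟪y', y'⟫ := by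
      rw [← real_inner_self_eq_norm_sq, hμdef]
      simp only [inner_add_left, inner_add_right, real_inner_smul_left, real_inner_smul_right]
      rw [real_inner_comm y' y]
      ring
    have hsub : y - y' ≠ 0 := sub_ne_zero.mpr hne
    have hs : 0 < ‖y - y'‖ ^ 2 := pow_pos (norm_pos_iff.mpr hsub) 2
    have heq : ⟪y', y'⟫ = ⟪y, y⟫ := by rw [h1, h2, hyr2, hy'r2]
    have hn : ‖y - y'‖ ^ 2 = ‖y‖ ^ 2 - 2 * ⟪y, y'⟫ + ‖y'‖ ^ 2 := norm_sub_sq_real y y'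
    have hba : ⟪y, y⟫ - ⟪y, y'⟫ = ‖y - y'‖ ^ 2 / 2 := by
      linarith [hn, h1, h2, hyr2, hy'r2]
    have hdiff : (⟪θ, μ⟫ - 1 / 2 * ‖μ‖ ^ 2) - (⟪θ, y⟫ - 1 / 2 * ‖y‖ ^ 2)
        = t * (1 - m - t) * (⟪y, y⟫ - ⟪y, y'⟫) := by
      rw [hiθμ, hiθy, hμμ, heq, ← h1]
      ring
    have htm : 0 < 1 - m - t := by rw [ht]; linarith
    have hpos : 0 < t * (1 - m - t) * (⟪y, y⟫ - ⟪y, y'⟫) := by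
      apply mul_pos (mul_pos ht0 htm)
      rw [hba]; positivity
    linarith [hle, hdiff, hpos]
end
end

section
/- Let g : [0,1] → ℝ_+ be strictly convex and differentiable, and define Ω(p) := Σ_{j=1}^d g(p_j) for p in the probability simplex Δ^d (and +∞ outside). Then the regularized prediction ŷ_Ω(θ) = argmax_{p ∈ Δ^d} ⟨p, θ⟩ − Σ_j g(p_j) equals p(τ*), where p(τ) is defined coordinate-wise by p_j(τ) := (g')^{-1}(max{θ_j − τ, g'(0)}) and τ* is a root of φ(τ) := Σ_j p_j(τ) − 1. Moreover, such a root exists and satisfies τ* ∈ [τ_min, τ_max] with τ_min := max_i θ_i − g'(1) and τ_max := max_i θ_i − g'(1/d); on this interval the right-hand sides lie in the range of g', φ is decreasing, φ(τ_min) ≥ 0 and φ(τ_max) ≤ 0, and the root τ* and the resulting p(τ*) are unique. -/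
/-!
STATEMENT 19: Reduction of the regularized prediction over the simplex to root
finding. Let g : [0,1] → ℝ_+ be strictly convex and differentiable (with
derivative g', a strictly increasing bijection from [0,1] onto [g'(0), g'(1)]
with inverse ginv), and Ω(p) = Σ_j g(p_j) + I_Δ(p).  With
p_j(τ) = (g')⁻¹(max{θ_j − τ, g'(0)}), φ(τ) = Σ_j p_j(τ) − 1,
τ_min = max_i θ_i − g'(1) and τ_max = max_i θ_i − g'(1/d): the arguments of
(g')⁻¹ lie in its range on [τ_min, τ_max], φ is decreasing there with
φ(τ_min) ≥ 0 and φ(τ_max) ≤ 0, there is a root τ* ∈ [τ_min, τ_max] of φ whose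
p(τ*) lies in the simplex and maximizes ⟨p, θ⟩ − Σ_j g(p_j) over the simplex
(i.e. ŷ_Ω(θ) = p(τ*)), and the root (hence p(τ*)) is unique.
-/

open Set

lemma fy19_subgrad {g g' : ℝ → ℝ}
    (hgconv : StrictConvexOn ℝ (Set.Icc (0 : ℝ) 1) g)
    (hgderiv : ∀ t ∈ Set.Icc (0 : ℝ) 1,
      HasDerivWithinAt g (g' t) (Set.Icc (0 : ℝ) 1) t)
    {x y : ℝ} (hx : x ∈ Set.Icc (0 : ℝ) 1) (hy : y ∈ Set.Icc (0 : ℝ) 1) :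
    g' x * (y - x) ≤ g y - g x := by
  rcases lt_trichotomy x y with h | rfl | h
  · have h1 := hgconv.convexOn.le_slope_of_hasDerivWithinAt hx hy h (hgderiv x hx)
    rw [slope_def_field] at h1
    have hxy : 0 < y - x := sub_pos.2 h
    have := (le_div_iff₀ hxy).1 h1
    linarith
  · simp
  · have h1 := hgconv.convexOn.slope_le_of_hasDerivWithinAt hy hx h (hgderiv x hx)
    rw [slope_def_field] at h1
    have hxy : 0 < x - y := sub_pos.2 h
    have := (div_le_iff₀ hxy).1 h1
    linarith

lemma fy19_ginv_strictmono {g' ginv : ℝ → ℝ}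
    (hg'mono : StrictMonoOn g' (Set.Icc (0 : ℝ) 1))
    (hinv_right : ∀ s ∈ Set.Icc (g' 0) (g' 1),
      g' (ginv s) = s ∧ ginv s ∈ Set.Icc (0 : ℝ) 1) :
    StrictMonoOn ginv (Set.Icc (g' 0) (g' 1)) := by
  intro s1 h1 s2 h2 h12
  by_contra hle
  push_neg at hle
  have := hg'mono.monotoneOn (hinv_right s2 h2).2 (hinv_right s1 h1).2 hle
  rw [(hinv_right s1 h1).1, (hinv_right s2 h2).1] at this
  exact absurd this (not_le.2 h12)

lemma fy19_ginv_cont {g' ginv : ℝ → ℝ}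
    (hg'mono : StrictMonoOn g' (Set.Icc (0 : ℝ) 1))
    (hinv_left : ∀ t ∈ Set.Icc (0 : ℝ) 1, ginv (g' t) = t)
    (hinv_right : ∀ s ∈ Set.Icc (g' 0) (g' 1),
      g' (ginv s) = s ∧ ginv s ∈ Set.Icc (0 : ℝ) 1) :
    ContinuousOn ginv (Set.Icc (g' 0) (g' 1)) := by
  have h01 : (0:ℝ) ∈ Set.Icc (0:ℝ) 1 := ⟨le_rfl, zero_le_one⟩
  have h11 : (1:ℝ) ∈ Set.Icc (0:ℝ) 1 := ⟨zero_le_one, le_rfl⟩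
  have hAB : g' 0 < g' 1 := hg'mono h01 h11 zero_lt_one
  have hstrict := fy19_ginv_strictmono hg'mono hinv_right
  intro a ha
  have hrt : ContinuousWithinAt ginv (Set.Icc (g' 0) (g' 1) ∩ Set.Ici a) a := by
    rcases eq_or_lt_of_le ha.2 with hB | hB
    · have hs : Set.Icc (g' 0) (g' 1) ∩ Set.Ici a = {a} := by
        apply Set.eq_singleton_iff_unique_mem.2
        refine ⟨⟨ha, Set.self_mem_Ici⟩, ?_⟩
        rintro x ⟨hx1, hx2⟩
        exact le_antisymm (hB ▸ hx1.2) hx2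
      rw [hs]; exact continuousWithinAt_singleton
    · have hmem : Set.Icc (g' 0) (g' 1) ∈ nhdsWithin a (Set.Ici a) := by
        rw [mem_nhdsWithin]
        refine ⟨Set.Iio (g' 1), isOpen_Iio, hB, ?_⟩
        rintro x ⟨hx1, hx2⟩
        exact ⟨le_trans ha.1 hx2, le_of_lt hx1⟩
      have hlt1 : ginv a < 1 := by
        have h1 := (hinv_right a ha).1
        by_contra hge
        push_neg at hge
        have : (1:ℝ) = ginv a := le_antisymm hge (hinv_right a ha).2.2
        rw [← this] at h1
        exact absurd (h1 ▸ hB) (lt_irrefl _)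
      have hfs : ∀ b > ginv a, ∃ c ∈ Set.Icc (g' 0) (g' 1), ginv c ∈ Set.Ioc (ginv a) b := by
        intro b hb
        set t := min b 1 with ht
        have ht0 : 0 ≤ t := le_min (le_trans (hinv_right a ha).2.1 hb.le) zero_le_one
        have ht1 : t ∈ Set.Icc (0:ℝ) 1 := ⟨ht0, min_le_right _ _⟩
        refine ⟨g' t, ⟨hg'mono.monotoneOn h01 ht1 ht0, hg'mono.monotoneOn ht1 h11 (min_le_right _ _)⟩, ?_⟩
        rw [hinv_left t ht1]
        exact ⟨lt_min hb hlt1, min_le_left _ _⟩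
      exact ((hstrict.continuousWithinAt_right_of_exists_between hmem hfs).mono
        Set.inter_subset_right)
  have hlt : ContinuousWithinAt ginv (Set.Icc (g' 0) (g' 1) ∩ Set.Iic a) a := by
    rcases eq_or_lt_of_le ha.1 with hA | hA
    · have hs : Set.Icc (g' 0) (g' 1) ∩ Set.Iic a = {a} := by
        apply Set.eq_singleton_iff_unique_mem.2
        refine ⟨⟨ha, Set.self_mem_Ici⟩, ?_⟩
        rintro x ⟨hx1, hx2⟩
        exact le_antisymm hx2 (hA ▸ hx1.1)
      rw [hs]; exact continuousWithinAt_singleton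
    · have hmem : Set.Icc (g' 0) (g' 1) ∈ nhdsWithin a (Set.Iic a) := by
        rw [mem_nhdsWithin]
        refine ⟨Set.Ioi (g' 0), isOpen_Ioi, hA, ?_⟩
        rintro x ⟨hx1, hx2⟩
        exact ⟨le_of_lt hx1, le_trans hx2 ha.2⟩
      have hgt0 : 0 < ginv a := by
        have h1 := (hinv_right a ha).1
        by_contra hge
        push_neg at hge
        have : ginv a = 0 := le_antisymm hge (hinv_right a ha).2.1
        rw [this] at h1
        exact absurd (h1 ▸ hA) (lt_irrefl _)
      have hfs : ∀ b < ginv a, ∃ c ∈ Set.Icc (g' 0) (g' 1), ginv c ∈ Set.Ico b (ginv a) := by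
        intro b hb
        set t := max b 0 with ht
        have ht1 : t ∈ Set.Icc (0:ℝ) 1 :=
          ⟨le_max_right _ _, le_trans (max_le hb.le hgt0.le) (hinv_right a ha).2.2⟩
        refine ⟨g' t, ⟨hg'mono.monotoneOn h01 ht1 ht1.1, hg'mono.monotoneOn ht1 h11 ht1.2⟩, ?_⟩
        rw [hinv_left t ht1]
        exact ⟨le_max_left _ _, max_lt hb hgt0⟩
      exact ((hstrict.continuousWithinAt_left_of_exists_between hmem hfs).mono
        Set.inter_subset_right)
  have := hrt.union hlt
  refine this.mono ?_
  intro x hx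
  rcases le_total x a with h | h
  · exact Or.inr ⟨hx, h⟩
  · exact Or.inl ⟨hx, h⟩

theorem fy_statement_19 {d : ℕ} (hd : 0 < d)
    (g g' ginv : ℝ → ℝ)
    (hgpos : ∀ t ∈ Set.Icc (0 : ℝ) 1, 0 ≤ g t)
    (hgconv : StrictConvexOn ℝ (Set.Icc (0 : ℝ) 1) g)
    (hgderiv : ∀ t ∈ Set.Icc (0 : ℝ) 1,
      HasDerivWithinAt g (g' t) (Set.Icc (0 : ℝ) 1) t)
    (hg'mono : StrictMonoOn g' (Set.Icc (0 : ℝ) 1))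
    (hg'cont : ContinuousOn g' (Set.Icc (0 : ℝ) 1))
    (hinv_left : ∀ t ∈ Set.Icc (0 : ℝ) 1, ginv (g' t) = t)
    (hinv_right : ∀ s ∈ Set.Icc (g' 0) (g' 1),
      g' (ginv s) = s ∧ ginv s ∈ Set.Icc (0 : ℝ) 1)
    (θ : Fin d → ℝ) :
    let τmin : ℝ := sSup (Set.range θ) - g' 1
    let τmax : ℝ := sSup (Set.range θ) - g' (1 / (d : ℝ))
    let p : ℝ → Fin d → ℝ := fun τ j => ginv (max (θ j - τ) (g' 0))
    let φ : ℝ → ℝ := fun τ => (∑ j, p τ j) - 1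
    (∀ τ ∈ Set.Icc τmin τmax, ∀ j,
        max (θ j - τ) (g' 0) ∈ Set.Icc (g' 0) (g' 1)) ∧
    AntitoneOn φ (Set.Icc τmin τmax) ∧
    0 ≤ φ τmin ∧ φ τmax ≤ 0 ∧
    (∃ τ ∈ Set.Icc τmin τmax, φ τ = 0 ∧
      p τ ∈ stdSimplex ℝ (Fin d) ∧
      (∀ q ∈ stdSimplex ℝ (Fin d),
        (∑ j, q j * θ j) - (∑ j, g (q j))
          ≤ (∑ j, p τ j * θ j) - (∑ j, g (p τ j))) ∧
      (∀ τ' ∈ Set.Icc τmin τmax, φ τ' = 0 → τ' = τ)) := by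
  intro τmin τmax p φ
  have hdR : (0:ℝ) < d := Nat.cast_pos.2 hd
  have h01 : (0:ℝ) ∈ Set.Icc (0:ℝ) 1 := ⟨le_rfl, zero_le_one⟩
  have h11 : (1:ℝ) ∈ Set.Icc (0:ℝ) 1 := ⟨zero_le_one, le_rfl⟩
  have hdpos : (0:ℝ) < 1 / d := by positivity
  have hd1m : 1/(d:ℝ) ∈ Set.Icc (0:ℝ) 1 :=
    ⟨hdpos.le, (div_le_one hdR).2 (Nat.one_le_cast.2 hd)⟩
  have hAB : g' 0 < g' 1 := hg'mono h01 h11 zero_lt_one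
  have hAd : g' 0 < g' (1/(d:ℝ)) := hg'mono h01 hd1m hdpos
  have hdB : g' (1/(d:ℝ)) ≤ g' 1 := hg'mono.monotoneOn hd1m h11 hd1m.2
  have : Nonempty (Fin d) := ⟨⟨0, hd⟩⟩
  have hθbdd : BddAbove (Set.range θ) := (Set.finite_range θ).bddAbove
  have hθle : ∀ j, θ j ≤ sSup (Set.range θ) := fun j => le_csSup hθbdd ⟨j, rfl⟩
  obtain ⟨j0, hj0⟩ : ∃ j, θ j = sSup (Set.range θ) := by
    obtain ⟨j, hj⟩ := (Set.range_nonempty θ).csSup_mem (Set.finite_range θ)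
    exact ⟨j, hj⟩
  have hττ : τmin ≤ τmax := by simp only [τmin, τmax]; linarith
  have part1 : ∀ τ ∈ Set.Icc τmin τmax, ∀ j,
      max (θ j - τ) (g' 0) ∈ Set.Icc (g' 0) (g' 1) := by
    intro τ hτ j
    refine ⟨le_max_right _ _, max_le ?_ hAB.le⟩
    have h2 : τmin ≤ τ := hτ.1
    have h3 := hθle j
    simp only [τmin] at h2
    linarith
  have hpmem : ∀ τ ∈ Set.Icc τmin τmax, ∀ j, p τ j ∈ Set.Icc (0:ℝ) 1 := fun τ hτ j =>
    (hinv_right _ (part1 τ hτ j)).2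
  have hginv_strict := fy19_ginv_strictmono hg'mono hinv_right
  have hginv_mono := hginv_strict.monotoneOn
  have part2 : AntitoneOn φ (Set.Icc τmin τmax) := by
    intro τ hτ τ' hτ' h
    simp only [φ, p]
    have hle : ∀ j ∈ Finset.univ, ginv (max (θ j - τ') (g' 0)) ≤ ginv (max (θ j - τ) (g' 0)) :=
      fun j _ => hginv_mono (part1 τ' hτ' j) (part1 τ hτ j)
        (max_le_max (by linarith) le_rfl)
    have := Finset.sum_le_sum hle
    linarith
  have hτminmem : τmin ∈ Set.Icc τmin τmax := ⟨le_rfl, hττ⟩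
  have hτmaxmem : τmax ∈ Set.Icc τmin τmax := ⟨hττ, le_rfl⟩
  have part3 : 0 ≤ φ τmin := by
    have key : p τmin j0 = 1 := by
      simp only [p]
      have h1 : θ j0 - τmin = g' 1 := by simp only [τmin]; rw [hj0]; ring
      rw [h1, max_eq_left hAB.le, hinv_left 1 h11]
    have h2 : p τmin j0 ≤ ∑ j, p τmin j :=
      Finset.single_le_sum (fun j _ => (hpmem τmin hτminmem j).1) (Finset.mem_univ j0)
    rw [key] at h2
    simp only [φ]
    linarith
  have part4 : φ τmax ≤ 0 := by
    have hub : ∀ j ∈ Finset.univ, p τmax j ≤ 1/(d:ℝ) := by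
      intro j _
      have h1 : max (θ j - τmax) (g' 0) ≤ g' (1/(d:ℝ)) := by
        apply max_le _ hAd.le
        have := hθle j
        simp only [τmax]
        linarith
      calc p τmax j ≤ ginv (g' (1/(d:ℝ))) :=
            hginv_mono (part1 τmax hτmaxmem j) ⟨hAd.le, hdB⟩ h1
        _ = 1/(d:ℝ) := hinv_left _ hd1m
    have h2 := Finset.sum_le_sum hub
    rw [Finset.sum_const, Finset.card_univ, Fintype.card_fin, nsmul_eq_mul] at h2
    have h3 : (d:ℝ) * (1/(d:ℝ)) = 1 := by field_simp
    simp only [φ]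
    linarith
  refine ⟨part1, part2, part3, part4, ?_⟩
  -- strict antitonicity
  have hstrictanti : ∀ τ ∈ Set.Icc τmin τmax, ∀ τ' ∈ Set.Icc τmin τmax,
      τ < τ' → φ τ' < φ τ := by
    intro τ hτ τ' hτ' hlt
    simp only [φ, p]
    have hle : ∀ j ∈ Finset.univ, ginv (max (θ j - τ') (g' 0)) ≤ ginv (max (θ j - τ) (g' 0)) :=
      fun j _ => hginv_mono (part1 τ' hτ' j) (part1 τ hτ j)
        (max_le_max (by linarith) le_rfl)
    have hA' : g' 0 < θ j0 - τ' := by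
      have h2 := hτ'.2
      simp only [τmax] at h2
      rw [hj0]
      linarith
    have hstrict : ginv (max (θ j0 - τ') (g' 0)) < ginv (max (θ j0 - τ) (g' 0)) := by
      apply hginv_strict (part1 τ' hτ' j0) (part1 τ hτ j0)
      rw [max_eq_left hA'.le]
      exact lt_of_lt_of_le (by linarith) (le_max_left _ _)
    have hsum := Finset.sum_lt_sum hle ⟨j0, Finset.mem_univ j0, hstrict⟩
    linarith
  -- continuity and IVT
  have hφcont : ContinuousOn φ (Set.Icc τmin τmax) := by
    apply ContinuousOn.sub _ continuousOn_const
    apply continuousOn_finset_sum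
    intro j _
    apply (fy19_ginv_cont hg'mono hinv_left hinv_right).comp
    · exact ((continuous_const.sub continuous_id).max continuous_const).continuousOn
    · intro τ hτ
      exact part1 τ hτ j
  obtain ⟨τ, hτmem, hτroot⟩ : ∃ τ ∈ Set.Icc τmin τmax, φ τ = 0 := by
    have h0 : (0:ℝ) ∈ Set.Icc (φ τmax) (φ τmin) := ⟨part4, part3⟩
    obtain ⟨τ, hτmem, hτeq⟩ := intermediate_value_Icc' hττ hφcont h0
    exact ⟨τ, hτmem, hτeq⟩
  have hsump : ∑ j, p τ j = 1 := by
    have := hτroot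
    simp only [φ] at this
    linarith
  refine ⟨τ, hτmem, hτroot, ⟨fun j => (hpmem τ hτmem j).1, hsump⟩, ?_, ?_⟩
  · -- optimality
    intro q hq
    have hsumq : ∑ j, q j = 1 := hq.2
    have hq01 : ∀ j, q j ∈ Set.Icc (0:ℝ) 1 := by
      intro j
      refine ⟨hq.1 j, ?_⟩
      calc q j ≤ ∑ i, q i := Finset.single_le_sum (fun i _ => hq.1 i) (Finset.mem_univ j)
        _ = 1 := hq.2
    have key : ∀ j ∈ Finset.univ, q j * (θ j - τ) - g (q j) ≤ p τ j * (θ j - τ) - g (p τ j) := by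
      intro j _
      have hm := part1 τ hτmem j
      have hP : p τ j ∈ Set.Icc (0:ℝ) 1 := hpmem τ hτmem j
      have hg'P : g' (p τ j) = max (θ j - τ) (g' 0) := (hinv_right _ hm).1
      have hsub := fy19_subgrad hgconv hgderiv hP (hq01 j)
      rw [hg'P] at hsub
      rcases le_total (g' 0) (θ j - τ) with hc | hc
      · rw [max_eq_left hc] at hsub
        nlinarith [hsub]
      · have hP0 : p τ j = 0 := by
          simp only [p]
          rw [max_eq_right hc, hinv_left 0 h01]
        rw [max_eq_right hc] at hsub
        rw [hP0] at hsub ⊢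
        have hmul : q j * (θ j - τ) ≤ q j * g' 0 :=
          mul_le_mul_of_nonneg_left hc (hq01 j).1
        nlinarith [hsub, hmul]
    have hsumle := Finset.sum_le_sum key
    have expand : ∀ (r : Fin d → ℝ), (∑ j, r j = 1) →
        (∑ j, (r j * (θ j - τ) - g (r j))) = (∑ j, r j * θ j) - (∑ j, g (r j)) - τ := by
      intro r hr
      have h1 : ∀ j ∈ Finset.univ, r j * (θ j - τ) - g (r j) = r j * θ j - g (r j) - τ * r j :=
        fun j _ => by ring
      rw [Finset.sum_congr rfl h1]
      rw [Finset.sum_sub_distrib, Finset.sum_sub_distrib, ← Finset.mul_sum, hr]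
      ring
    rw [expand q hsumq, expand (p τ) hsump] at hsumle
    linarith
  · -- uniqueness
    intro τ' hτ'mem hτ'root
    by_contra hne
    rcases lt_or_gt_of_ne hne with h | h
    · have := hstrictanti τ' hτ'mem τ hτmem h
      rw [hτroot, hτ'root] at this
      exact lt_irrefl 0 this
    · have := hstrictanti τ hτmem τ' hτ'mem h
      rw [hτroot, hτ'root] at this
      exact lt_irrefl 0 this
end
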